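/- arXiv:1412.8399 — 2 statements merged into one kernel-verified Lean document; each statement's English description precedes it below -/
import Mathlib

section
/- Let M₁ and M₂ be simple matroids on ground sets E₁, E₂ with ℓ = E₁ ∩ E₂, such that M₁|ℓ = M₂|ℓ and this common restriction is a modular matroid. Then the function r defined on subsets X of E₁ ∪ E₂ by r(X) = min over all Y with X ⊆ Y ⊆ E₁ ∪ E₂ of (r₁(Y ∩ E₁) + r₂(Y ∩ E₂) − r₁(Y ∩ ℓ)) is the rank function of a matroid on E₁ ∪ E₂. -/
open Set
open scoped Matroid

/-- The rank (as an extended natural number) of a set `X` in a matroid `M`: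
the supremum of the cardinalities of independent subsets of `X`. -/
noncomputable def Matroid.erank' {α : Type*} (M : Matroid α) (X : Set α) : ℕ∞ :=
  ⨆ I ∈ {I : Set α | M.Indep I ∧ I ⊆ X}, I.encard

/-- A matroid is simple if every subset of the ground set with at most two
elements is independent. -/
def Matroid.IsSimple' {α : Type*} (M : Matroid α) : Prop :=
  ∀ X ⊆ M.E, X.encard ≤ 2 → M.Indep X

/-- A matroid is modular if `r(F) + r(F') = r(F ∩ F') + r(F ∪ F')` for every
pair of flats `F`, `F'`. -/
def Matroid.IsModular' {α : Type*} (M : Matroid α) : Prop :=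
  ∀ F F' : Set α, M.IsFlat F → M.IsFlat F' →
    M.erank' F + M.erank' F' = M.erank' (F ∩ F') + M.erank' (F ∪ F')

/-- The rank function of the proper amalgam of `M₁` and `M₂`:
`r(X) = min { r₁(Y ∩ E₁) + r₂(Y ∩ E₂) - r₁(Y ∩ ℓ) : X ⊆ Y ⊆ E₁ ∪ E₂ }`,
where `ℓ = E₁ ∩ E₂`. -/
noncomputable def amalRank {α : Type*} (M₁ M₂ : Matroid α) (X : Set α) : ℕ∞ :=
  ⨅ Y ∈ {Y : Set α | X ⊆ Y ∧ Y ⊆ M₁.E ∪ M₂.E},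
    M₁.erank' (Y ∩ M₁.E) + M₂.erank' (Y ∩ M₂.E) - M₁.erank' (Y ∩ (M₁.E ∩ M₂.E))

/-- `A` is the proper amalgam of `M₁` and `M₂`: its ground set is `E₁ ∪ E₂` and its
rank function is given by the proper-amalgam rank formula. -/
def IsProperAmalgam {α : Type*} (M₁ M₂ A : Matroid α) : Prop :=
  A.E = M₁.E ∪ M₂.E ∧ ∀ X ⊆ M₁.E ∪ M₂.E, A.erank' X = amalRank M₁ M₂ X

namespace Matroid
variable {α : Type*} {M : Matroid α} {I J X Y R : Set α} {e : α} {k : ℕ∞}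

lemma le_erank'_of (hI : M.Indep I) (hIX : I ⊆ X) : I.encard ≤ M.erank' X :=
  le_biSup _ ⟨hI, hIX⟩

lemma erank'_le_iff : M.erank' X ≤ k ↔ ∀ I, M.Indep I → I ⊆ X → I.encard ≤ k := by
  simp [Matroid.erank', iSup₂_le_iff, mem_setOf_eq, and_imp]

lemma IsBasis'.erank'_eq (hI : M.IsBasis' I X) : M.erank' X = I.encard := by
  refine le_antisymm (erank'_le_iff.2 fun J hJ hJX => ?_) (le_erank'_of hI.indep hI.subset)
  obtain ⟨K, hK, hJK⟩ := hJ.subset_isBasis'_of_subset hJX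
  exact (encard_mono hJK).trans (hK.encard_eq_encard hI).le

lemma IsBasis.erank'_eq (hI : M.IsBasis I X) : M.erank' X = I.encard := hI.isBasis'.erank'_eq

lemma erank'_mono (h : X ⊆ Y) : M.erank' X ≤ M.erank' Y :=
  erank'_le_iff.2 fun I hI hIX => le_erank'_of hI (hIX.trans h)

lemma erank'_le_encard : M.erank' X ≤ X.encard :=
  erank'_le_iff.2 fun _ _ h => encard_mono h

@[simp] lemma erank'_empty : M.erank' (∅ : Set α) = 0 := by
  have := erank'_le_encard (M := M) (X := (∅ : Set α))
  simpa using this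

lemma erank'_inter_ground : M.erank' (X ∩ M.E) = M.erank' X := by
  refine le_antisymm (erank'_mono inter_subset_left) (erank'_le_iff.2 fun I hI hIX => ?_)
  exact le_erank'_of hI (subset_inter hIX hI.subset_ground)

lemma erank'_restrict : (M ↾ R).erank' X = M.erank' (X ∩ R) := by
  refine le_antisymm (erank'_le_iff.2 fun I hI hIX => ?_) (erank'_le_iff.2 fun I hI hIX => ?_)
  · rw [restrict_indep_iff] at hI
    exact le_erank'_of hI.1 (subset_inter hIX hI.2)
  · exact le_erank'_of (restrict_indep_iff.2 ⟨hI, hIX.trans inter_subset_right⟩)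
      (hIX.trans inter_subset_left)

lemma erank'_closure_eq (hX : X ⊆ M.E) : M.erank' (M.closure X) = M.erank' X := by
  obtain ⟨I, hI⟩ := M.exists_isBasis X hX
  rw [hI.erank'_eq, hI.isBasis_closure_right.erank'_eq]

lemma erank'_union_eq_of_subset_closure (hX : X ⊆ M.E) (hA : Y ⊆ M.closure X) :
    M.erank' (X ∪ Y) = M.erank' X := by
  refine le_antisymm ?_ (erank'_mono subset_union_left)
  rw [← erank'_closure_eq hX]
  exact erank'_mono (union_subset (M.subset_closure X hX) hA)

lemma erank'_insert_le : M.erank' (insert e X) ≤ M.erank' X + 1 := by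
  refine erank'_le_iff.2 fun I hI hIX => ?_
  have h1 : I \ {e} ⊆ X := by
    rw [diff_subset_iff]
    simpa [singleton_union] using hIX
  have h2 : I.encard ≤ (I \ {e}).encard + 1 := by
    by_cases he : e ∈ I
    · rw [← encard_diff_singleton_add_one he]
    · rw [diff_singleton_eq_self he]; exact le_self_add
  exact h2.trans (add_le_add_left (le_erank'_of (hI.subset diff_subset) h1) 1)

lemma erank'_submod (hX : X ⊆ M.E) (hY : Y ⊆ M.E) :
    M.erank' (X ∪ Y) + M.erank' (X ∩ Y) ≤ M.erank' X + M.erank' Y := by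
  obtain ⟨I, hI⟩ := M.exists_isBasis (X ∩ Y) (inter_subset_left.trans hX)
  obtain ⟨J, hJ, hIJ⟩ := hI.indep.subset_isBasis_of_subset
    (hI.subset.trans (inter_subset_left.trans subset_union_left)) (union_subset hX hY)
  have hJXY : J ∩ (X ∩ Y) = I := by
    refine (hI.eq_of_subset_indep (hJ.indep.subset inter_subset_left)
      (subset_inter hIJ hI.subset) inter_subset_right).symm
  rw [hJ.erank'_eq, hI.erank'_eq]
  have h1 : J ∩ X ∪ J ∩ Y = J := by
    rw [← inter_union_distrib_left, inter_eq_left.2 hJ.subset]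
  have h2 : (J ∩ X) ∩ (J ∩ Y) = I := by
    rw [← hJXY]; ext x; simp [mem_inter_iff]; tauto
  have hcard : J.encard + I.encard = (J ∩ X).encard + (J ∩ Y).encard := by
    rw [← encard_union_add_encard_inter (J ∩ X) (J ∩ Y), h1, h2]
  rw [hcard]
  exact add_le_add (le_erank'_of (hJ.indep.subset inter_subset_left) inter_subset_right)
    (le_erank'_of (hJ.indep.subset inter_subset_left) inter_subset_right)


variable {N : Matroid α} {R S : Set α}
variable {α : Type*} {M N : Matroid α} {I J X Y R S : Set α} {e : α} {k : ℕ∞}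









lemma erank'_insert_eq_of_mem_closure (hX : X ⊆ M.E) (he : e ∈ M.closure X) :
    M.erank' (insert e X) = M.erank' X := by
  rw [insert_eq, union_comm]
  exact erank'_union_eq_of_subset_closure hX (by simpa using he)

lemma mem_closure_of_erank' (hX : X ⊆ M.E) (he : e ∈ M.E) (hfin : M.erank' X ≠ ⊤)
    (h : M.erank' (insert e X) ≤ M.erank' X) : e ∈ M.closure X := by
  obtain ⟨I, hI⟩ := M.exists_isBasis X hX
  by_contra hecl
  rw [← hI.closure_eq_closure] at hecl
  have heI : e ∉ I := fun h' => hecl (M.mem_closure_of_mem h' hI.indep.subset_ground)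
  have hind : M.Indep (insert e I) := by
    rw [hI.indep.insert_indep_iff_of_notMem heI]
    exact ⟨he, hecl⟩
  have hle := le_erank'_of hind (insert_subset_insert hI.subset)
  rw [encard_insert_of_notMem heI] at hle
  have h2 : I.encard + 1 ≤ I.encard := hle.trans (h.trans_eq hI.erank'_eq)
  rw [hI.erank'_eq] at hfin
  exact ((ENat.add_one_le_iff hfin).1 h2).false

/-- finite nonempty subsets of a chain union lie in a chain member -/
lemma exists_mem_chain_of_finite {C : Set (Set α)} (hC : IsChain (· ⊆ ·) C) (hJfin : J.Finite)
    (hne : J.Nonempty) (hJ : J ⊆ ⋃₀ C) : ∃ Y ∈ C, J ⊆ Y := by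
  refine Set.Finite.induction_on (motive := fun J _ => J.Nonempty → J ⊆ ⋃₀ C → ∃ Y ∈ C, J ⊆ Y)
    _ hJfin (fun h _ => absurd rfl h.ne_empty) ?_ hne hJ
  intro a s _ _ IH _ hsub
  obtain ⟨Ya, hYa, haYa⟩ := hsub (mem_insert a s)
  rcases s.eq_empty_or_nonempty with rfl | hsne
  · exact ⟨Ya, hYa, by simpa using haYa⟩
  · obtain ⟨Y, hY, hsY⟩ := IH hsne ((subset_insert a s).trans hsub)
    rcases eq_or_ne Ya Y with rfl | hne'
    · exact ⟨Ya, hYa, insert_subset haYa hsY⟩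
    rcases hC hYa hY hne' with h | h
    · exact ⟨Y, hY, insert_subset (h haYa) hsY⟩
    · exact ⟨Ya, hYa, insert_subset haYa (hsY.trans h)⟩

lemma erank'_sUnion_chain_le {C : Set (Set α)} (hC : IsChain (· ⊆ ·) C)
    (hk : ∀ Y ∈ C, M.erank' Y ≤ k) (hfin : k ≠ ⊤) : M.erank' (⋃₀ C) ≤ k := by
  refine erank'_le_iff.2 fun I hI hIX => ?_
  by_contra hlt
  push_neg at hlt
  obtain ⟨n, rfl⟩ : ∃ n : ℕ, k = n := ⟨k.toNat, (ENat.coe_toNat hfin).symm⟩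
  have h1 : (n + 1 : ℕ∞) ≤ I.encard := ENat.add_one_le_iff (by simp) |>.2 (by exact_mod_cast hlt)
  obtain ⟨J, hJI, hJcard⟩ := Set.exists_subset_encard_eq h1
  have hJfin : J.Finite := finite_of_encard_eq_coe (by exact_mod_cast hJcard)
  have hJne : J.Nonempty := by
    rw [← encard_ne_zero, hJcard]; simp
  obtain ⟨Y, hY, hJY⟩ := exists_mem_chain_of_finite hC hJfin hJne (hJI.trans hIX)
  have := (le_erank'_of (hI.subset hJI) hJY).trans (hk Y hY)
  rw [hJcard] at this
  exact absurd this (by exact_mod_cast Nat.not_succ_le_self n)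

lemma flat_restrict_closure_inter (hR : R ⊆ M.E) (Z : Set α) :
    (M ↾ R).IsFlat (M.closure Z ∩ R) := by
  constructor
  · intro I X hIF hIX
    rw [isBasis_restrict_iff hR] at hIF hIX
    obtain ⟨hIF, hFR⟩ := hIF
    obtain ⟨hIX, hXR⟩ := hIX
    have hXcl : X ⊆ M.closure Z :=
      calc X ⊆ M.closure I := hIX.subset_closure
      _ = M.closure (M.closure Z ∩ R) := hIF.closure_eq_closure
      _ ⊆ M.closure (M.closure Z) := M.closure_subset_closure inter_subset_left
      _ = M.closure Z := M.closure_closure Z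
    exact subset_inter hXcl hXR
  · exact inter_subset_right

lemma erank'_eq_of_restrict_eq (h : M ↾ R = N ↾ R) (hS : S ⊆ R) :
    M.erank' S = N.erank' S := by
  have h1 : M.erank' S = (M ↾ R).erank' S := by
    rw [erank'_restrict, inter_eq_left.2 hS]
  rw [h1, h, erank'_restrict, inter_eq_left.2 hS]

lemma mem_closure_of_restrict_eq (h : M ↾ R = N ↾ R) (hRM : R ⊆ M.E) (hRN : R ⊆ N.E)
    (hS : S ⊆ R) (heR : e ∈ R) (he : e ∈ M.closure S) : e ∈ N.closure S := by
  obtain ⟨I, hI⟩ := M.exists_isBasis S (hS.trans hRM)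
  have hIN : N.IsBasis I S := by
    have := hI.isBasis_restrict_of_subset (Y := R) hS
    rw [h, isBasis_restrict_iff hRN] at this
    exact this.1
  rw [← hI.closure_eq_closure] at he
  rw [← hIN.closure_eq_closure]
  rcases hI.indep.mem_closure_iff.1 he with hdep | hmem
  · refine hIN.indep.mem_closure_iff.2 (Or.inl ?_)
    rw [dep_iff] at hdep ⊢
    have hsub : insert e I ⊆ R := insert_subset heR (hI.subset.trans hS)
    constructor
    · intro hind
      refine hdep.1 ?_
      have : (N ↾ R).Indep (insert e I) := restrict_indep_iff.2 ⟨hind, hsub⟩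
      rw [← h, restrict_indep_iff] at this
      exact this.1
    · exact hsub.trans hRN
  · exact N.mem_closure_of_mem hmem (hIN.indep.subset_ground)
end Matroid

namespace AmalgamProof
open Set Matroid
variable {α : Type*} {M₁ M₂ : Matroid α} {X Y J S : Set α} {e : α} {k : ℕ∞}

/-- the quantity minimized in `amalRank` -/
noncomputable def aZ (M₁ M₂ : Matroid α) (Y : Set α) : ℕ∞ :=
  M₁.erank' (Y ∩ M₁.E) + M₂.erank' (Y ∩ M₂.E) - M₁.erank' (Y ∩ (M₁.E ∩ M₂.E))

lemma amalRank_def (M₁ M₂ : Matroid α) (X : Set α) :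
    amalRank M₁ M₂ X = ⨅ Y ∈ {Y : Set α | X ⊆ Y ∧ Y ⊆ M₁.E ∪ M₂.E}, aZ M₁ M₂ Y := rfl

lemma amalRank_le_aZ (hXY : X ⊆ Y) (hYE : Y ⊆ M₁.E ∪ M₂.E) :
    amalRank M₁ M₂ X ≤ aZ M₁ M₂ Y := by
  rw [amalRank_def]
  exact biInf_le _ ⟨hXY, hYE⟩

lemma le_amalRank (h : ∀ Y, X ⊆ Y → Y ⊆ M₁.E ∪ M₂.E → k ≤ aZ M₁ M₂ Y) :
    k ≤ amalRank M₁ M₂ X := by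
  rw [amalRank_def]
  exact le_iInf₂ fun Y hY => h Y hY.1 hY.2

lemma amalRank_mono (h : X ⊆ Y) : amalRank M₁ M₂ X ≤ amalRank M₁ M₂ Y :=
  le_amalRank fun Z h1 h2 => amalRank_le_aZ (h.trans h1) h2

lemma rl_le_sum (M₁ M₂ : Matroid α) (Y : Set α) :
    M₁.erank' (Y ∩ (M₁.E ∩ M₂.E)) ≤ M₁.erank' (Y ∩ M₁.E) + M₂.erank' (Y ∩ M₂.E) :=
  le_trans (erank'_mono (by rw [← inter_assoc]; exact inter_subset_left)) le_self_add

lemma aZ_add_rl (M₁ M₂ : Matroid α) (Y : Set α) :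
    aZ M₁ M₂ Y + M₁.erank' (Y ∩ (M₁.E ∩ M₂.E)) =
      M₁.erank' (Y ∩ M₁.E) + M₂.erank' (Y ∩ M₂.E) :=
  tsub_add_cancel_of_le (rl_le_sum M₁ M₂ Y)

lemma exists_min_aZ (hX : X ⊆ M₁.E ∪ M₂.E) :
    ∃ Y, X ⊆ Y ∧ Y ⊆ M₁.E ∪ M₂.E ∧ aZ M₁ M₂ Y = amalRank M₁ M₂ X := by
  set V : Set ℕ∞ := (aZ M₁ M₂) '' {Y | X ⊆ Y ∧ Y ⊆ M₁.E ∪ M₂.E} with hV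
  have hne : V.Nonempty := ⟨aZ M₁ M₂ (M₁.E ∪ M₂.E), ⟨M₁.E ∪ M₂.E, ⟨hX, Subset.rfl⟩, rfl⟩⟩
  obtain ⟨v, ⟨Y, hY, rfl⟩, hmin⟩ := wellFounded_lt.has_min V hne
  refine ⟨Y, hY.1, hY.2, le_antisymm ?_ (amalRank_le_aZ hY.1 hY.2)⟩
  exact le_amalRank fun Z h1 h2 => le_of_not_gt (hmin _ ⟨Z, ⟨h1, h2⟩, rfl⟩)

section ctx
variable (hres : M₁ ↾ (M₁.E ∩ M₂.E) = M₂ ↾ (M₁.E ∩ M₂.E))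
include hres

lemma r2_eq_r1 (hS : S ⊆ M₁.E ∩ M₂.E) : M₂.erank' S = M₁.erank' S :=
  (erank'_eq_of_restrict_eq hres hS).symm

lemma cl12 (hS : S ⊆ M₁.E ∩ M₂.E) (he : e ∈ M₁.E ∩ M₂.E) (h : e ∈ M₁.closure S) :
    e ∈ M₂.closure S :=
  mem_closure_of_restrict_eq hres inter_subset_left inter_subset_right hS he h

lemma modular_flats (hmod : (M₁ ↾ (M₁.E ∩ M₂.E)).IsModular') {F F' : Set α}
    (hF : (M₁ ↾ (M₁.E ∩ M₂.E)).IsFlat F) (hF' : (M₁ ↾ (M₁.E ∩ M₂.E)).IsFlat F') :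
    M₁.erank' F + M₁.erank' F' = M₁.erank' (F ∩ F') + M₁.erank' (F ∪ F') := by
  have hFs : F ⊆ M₁.E ∩ M₂.E := hF.subset_ground
  have hFs' : F' ⊆ M₁.E ∩ M₂.E := hF'.subset_ground
  have key := hmod F F' hF hF'
  have conv : ∀ Z : Set α, Z ⊆ M₁.E ∩ M₂.E →
      (M₁ ↾ (M₁.E ∩ M₂.E)).erank' Z = M₁.erank' Z := by
    intro Z hZ
    rw [erank'_restrict, inter_eq_left.2 hZ]
  rwa [conv F hFs, conv F' hFs', conv _ ((inter_subset_left).trans hFs),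
    conv _ (union_subset hFs hFs')] at key

/-- the ℓ-closure operation -/
lemma tld_spec (hY : Y ⊆ M₁.E ∪ M₂.E) :
    ∃ Y', Y ⊆ Y' ∧ Y' ⊆ M₁.E ∪ M₂.E ∧ aZ M₁ M₂ Y' ≤ aZ M₁ M₂ Y ∧
      (M₁ ↾ (M₁.E ∩ M₂.E)).IsFlat (Y' ∩ (M₁.E ∩ M₂.E)) := by
  set l := M₁.E ∩ M₂.E with hl
  set A := M₁.closure (Y ∩ l) ∩ l with hA
  have hYl1 : Y ∩ l ⊆ M₁.E := inter_subset_right.trans inter_subset_left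
  have hAl : A ⊆ l := inter_subset_right
  have hint : (Y ∪ A) ∩ l = A := by
    apply subset_antisymm
    · rw [union_inter_distrib_right]
      exact union_subset (subset_inter (M₁.subset_closure _ hYl1) inter_subset_right)
        inter_subset_left
    · exact subset_inter (fun x hx => Or.inr hx) hAl
  refine ⟨Y ∪ A, subset_union_left, union_subset hY (hAl.trans
    (inter_subset_left.trans subset_union_left)), ?_, ?_⟩
  · -- rank inequality
    have h1 : M₁.erank' ((Y ∪ A) ∩ M₁.E) = M₁.erank' (Y ∩ M₁.E) := by
      have heq : (Y ∪ A) ∩ M₁.E = (Y ∩ M₁.E) ∪ A := by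
        rw [union_inter_distrib_right, inter_eq_left.2 (hAl.trans inter_subset_left)]
      rw [heq]
      exact erank'_union_eq_of_subset_closure inter_subset_right
        (inter_subset_left.trans
          (M₁.closure_subset_closure (inter_subset_inter_right Y inter_subset_left)))
    have h2 : M₂.erank' ((Y ∪ A) ∩ M₂.E) = M₂.erank' (Y ∩ M₂.E) := by
      have heq : (Y ∪ A) ∩ M₂.E = (Y ∩ M₂.E) ∪ A := by
        rw [union_inter_distrib_right, inter_eq_left.2 (hAl.trans inter_subset_right)]
      rw [heq]
      refine erank'_union_eq_of_subset_closure inter_subset_right ?_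
      intro x hx
      have hx2 : x ∈ M₂.closure (Y ∩ l) :=
        cl12 hres inter_subset_right (hAl hx) hx.1
      exact M₂.closure_subset_closure (inter_subset_inter_right Y inter_subset_right) hx2
    have h3 : M₁.erank' (Y ∩ l) ≤ M₁.erank' ((Y ∪ A) ∩ l) := by
      rw [hint]
      exact erank'_mono (subset_inter (M₁.subset_closure _ hYl1) inter_subset_right)
    calc aZ M₁ M₂ (Y ∪ A)
        = M₁.erank' ((Y ∪ A) ∩ M₁.E) + M₂.erank' ((Y ∪ A) ∩ M₂.E)
            - M₁.erank' ((Y ∪ A) ∩ l) := rfl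
      _ ≤ M₁.erank' (Y ∩ M₁.E) + M₂.erank' (Y ∩ M₂.E) - M₁.erank' (Y ∩ l) := by
          rw [h1, h2]
          exact tsub_le_tsub_left h3 _
      _ = aZ M₁ M₂ Y := rfl
  · rw [hint, hA]
    exact flat_restrict_closure_inter inter_subset_left _

lemma exists_closed_min (hX : X ⊆ M₁.E ∪ M₂.E) :
    ∃ Y, X ⊆ Y ∧ Y ⊆ M₁.E ∪ M₂.E ∧ aZ M₁ M₂ Y = amalRank M₁ M₂ X ∧
      (M₁ ↾ (M₁.E ∩ M₂.E)).IsFlat (Y ∩ (M₁.E ∩ M₂.E)) := by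
  obtain ⟨Y₀, hXY₀, hY₀E, hY₀⟩ := exists_min_aZ (M₁ := M₁) (M₂ := M₂) hX
  obtain ⟨Y, hY₀Y, hYE, hle, hfl⟩ := tld_spec hres hY₀E
  refine ⟨Y, hXY₀.trans hY₀Y, hYE, le_antisymm (hY₀ ▸ hle) (amalRank_le_aZ (hXY₀.trans hY₀Y) hYE), hfl⟩

end ctx
end AmalgamProof

namespace AmalgamProof
open Set Matroid
variable {α : Type*} {M₁ M₂ : Matroid α} {X Y S : Set α}

lemma enat_cancel_sub {cc aa a1 a2 q g p p' : ℕ∞}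
    (hq : q ≠ ⊤) (hg : g ≠ ⊤) (hp : p ≠ ⊤) (hp' : p' ≠ ⊤)
    (h1 : q ≤ cc) (h2 : g ≤ aa) (h3 : p ≤ a1) (h4 : p' ≤ a2)
    (master : cc + aa + (p + p') ≤ a1 + a2 + (q + g)) :
    (cc - q) + (aa - g) ≤ (a1 - p) + (a2 - p') := by
  have hc : q + g + (p + p') ≠ ⊤ := by
    lift q to ℕ using hq; lift g to ℕ using hg; lift p to ℕ using hp; lift p' to ℕ using hp'
    rw [← Nat.cast_add, ← Nat.cast_add, ← Nat.cast_add]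
    exact ENat.coe_ne_top _
  rw [← ENat.add_le_add_iff_right hc]
  have e1 : cc - q + (aa - g) + (q + g + (p + p')) = cc + aa + (p + p') := by
    have k1 : cc - q + q = cc := tsub_add_cancel_of_le h1
    have k2 : aa - g + g = aa := tsub_add_cancel_of_le h2
    calc cc - q + (aa - g) + (q + g + (p + p'))
        = (cc - q + q) + ((aa - g) + g) + (p + p') := by
          generalize cc - q = u; generalize aa - g = w; abel
      _ = cc + aa + (p + p') := by rw [k1, k2]
  have e2 : a1 - p + (a2 - p') + (q + g + (p + p')) = a1 + a2 + (q + g) := by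
    have k3 : a1 - p + p = a1 := tsub_add_cancel_of_le h3
    have k4 : a2 - p' + p' = a2 := tsub_add_cancel_of_le h4
    calc a1 - p + (a2 - p') + (q + g + (p + p'))
        = (a1 - p + p) + ((a2 - p') + p') + (q + g) := by
          generalize a1 - p = u; generalize a2 - p' = w; abel
      _ = a1 + a2 + (q + g) := by rw [k3, k4]
  rw [e1, e2]
  exact master

lemma enat_g_identity {g w₁ w₂ i : ℕ∞} (hg : g ≠ ⊤) (h1 : w₁ ≤ g) (h2 : w₂ ≤ g)
    (hc : w₁ + w₂ = i + g) : (g - w₁) + (g - w₂) + i = g := by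
  lift g to ℕ using hg
  lift w₁ to ℕ using ne_top_of_le_ne_top (by simp) h1
  lift w₂ to ℕ using ne_top_of_le_ne_top (by simp) h2
  have hi : i ≠ ⊤ := by
    intro h
    rw [h, top_add, ← Nat.cast_add] at hc
    exact (ENat.coe_ne_top _) hc
  lift i to ℕ using hi
  rw [← Nat.cast_add] at hc
  norm_cast at hc h1 h2 ⊢
  omega

lemma master_arith {C₁ C₂ A B u v p p' q i g gw1 gw2 a₁ a₁' b₁ b₁' : ℕ∞}
    (hA : A ≤ u + gw1) (hB : B ≤ v + gw2) (hd' : p + p' ≤ q + i)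
    (hgid : gw1 + gw2 + i = g)
    (he : C₁ + u ≤ a₁ + a₁') (hf : C₂ + v ≤ b₁ + b₁') :
    (C₁ + C₂) + (A + B) + (p + p') ≤ (a₁ + b₁) + (a₁' + b₁') + (q + g) := by
  calc (C₁ + C₂) + (A + B) + (p + p')
      ≤ (C₁ + C₂) + ((u + gw1) + (v + gw2)) + (q + i) :=
        add_le_add (add_le_add le_rfl (add_le_add hA hB)) hd'
    _ = (C₁ + u) + (C₂ + v) + (gw1 + gw2 + i) + q := by abel
    _ = (C₁ + u) + (C₂ + v) + g + q := by rw [hgid]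
    _ ≤ (a₁ + a₁') + (b₁ + b₁') + g + q :=
        add_le_add (add_le_add (add_le_add he hf) le_rfl) le_rfl
    _ = (a₁ + b₁) + (a₁' + b₁') + (q + g) := by abel

lemma aZ_submod (hres : M₁ ↾ (M₁.E ∩ M₂.E) = M₂ ↾ (M₁.E ∩ M₂.E))
    (hfin : M₁.erank' (M₁.E ∩ M₂.E) ≠ ⊤)
    (hmod : (M₁ ↾ (M₁.E ∩ M₂.E)).IsModular')
    {Y Y' : Set α} (hY : Y ⊆ M₁.E ∪ M₂.E) (hY' : Y' ⊆ M₁.E ∪ M₂.E)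
    (hfl : (M₁ ↾ (M₁.E ∩ M₂.E)).IsFlat (Y ∩ (M₁.E ∩ M₂.E)))
    (hfl' : (M₁ ↾ (M₁.E ∩ M₂.E)).IsFlat (Y' ∩ (M₁.E ∩ M₂.E))) :
    ∃ S, Y ∪ Y' ⊆ S ∧ S ⊆ M₁.E ∪ M₂.E ∧
      aZ M₁ M₂ (Y ∩ Y') + aZ M₁ M₂ S ≤ aZ M₁ M₂ Y + aZ M₁ M₂ Y' := by
  have hlE₁ : M₁.E ∩ M₂.E ⊆ M₁.E := inter_subset_left
  have hlE₂ : M₁.E ∩ M₂.E ⊆ M₂.E := inter_subset_right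
  have hfinl : ∀ Z : Set α, Z ⊆ M₁.E ∩ M₂.E → M₁.erank' Z ≠ ⊤ :=
    fun Z hZ => ne_top_of_le_ne_top hfin (erank'_mono hZ)
  have base₁ : (Y ∩ M₁.E) ∪ (Y' ∩ M₁.E) ⊆ M₁.E :=
    union_subset inter_subset_right inter_subset_right
  have base₂ : (Y ∩ M₂.E) ∪ (Y' ∩ M₂.E) ⊆ M₂.E :=
    union_subset inter_subset_right inter_subset_right
  set W₁ := M₁.closure ((Y ∩ M₁.E) ∪ (Y' ∩ M₁.E)) with hW₁def
  set W₂ := M₂.closure ((Y ∩ M₂.E) ∪ (Y' ∩ M₂.E)) with hW₂def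
  have hW₁E : W₁ ⊆ M₁.E := M₁.closure_subset_ground _
  have hW₂E : W₂ ⊆ M₂.E := M₂.closure_subset_ground _
  have hsub₁ : (Y ∩ M₁.E) ∪ (Y' ∩ M₁.E) ⊆ W₁ := M₁.subset_closure _ base₁
  have hsub₂ : (Y ∩ M₂.E) ∪ (Y' ∩ M₂.E) ⊆ W₂ := M₂.subset_closure _ base₂
  set S := W₁ ∪ W₂ with hSdef
  have hSE : S ⊆ M₁.E ∪ M₂.E :=
    union_subset (hW₁E.trans subset_union_left) (hW₂E.trans subset_union_right)
  have hYS : Y ∪ Y' ⊆ S := by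
    rintro x (hx | hx)
    · rcases hY hx with h1 | h2
      · exact Or.inl (hsub₁ (Or.inl ⟨hx, h1⟩))
      · exact Or.inr (hsub₂ (Or.inl ⟨hx, h2⟩))
    · rcases hY' hx with h1 | h2
      · exact Or.inl (hsub₁ (Or.inr ⟨hx, h1⟩))
      · exact Or.inr (hsub₂ (Or.inr ⟨hx, h2⟩))
  -- set identities
  have idS1 : S ∩ M₁.E = W₁ ∪ (W₂ ∩ (M₁.E ∩ M₂.E)) := by
    ext x
    have h1 := @hW₁E x
    have h2 := @hW₂E x
    simp only [hSdef, mem_union, mem_inter_iff]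
    tauto
  have idS2 : S ∩ M₂.E = W₂ ∪ (W₁ ∩ (M₁.E ∩ M₂.E)) := by
    ext x
    have h1 := @hW₁E x
    have h2 := @hW₂E x
    simp only [hSdef, mem_union, mem_inter_iff]
    tauto
  have idSl : S ∩ (M₁.E ∩ M₂.E) = (W₁ ∩ (M₁.E ∩ M₂.E)) ∪ (W₂ ∩ (M₁.E ∩ M₂.E)) := by
    rw [hSdef, union_inter_distrib_right]
  have idWG1 : W₁ ∪ ((W₁ ∩ (M₁.E ∩ M₂.E)) ∪ (W₂ ∩ (M₁.E ∩ M₂.E))) = S ∩ M₁.E := by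
    rw [idS1, ← union_assoc, union_eq_self_of_subset_right inter_subset_left]
  have idWG1' : W₁ ∩ ((W₁ ∩ (M₁.E ∩ M₂.E)) ∪ (W₂ ∩ (M₁.E ∩ M₂.E))) = W₁ ∩ (M₁.E ∩ M₂.E) := by
    ext x
    simp only [mem_union, mem_inter_iff]
    tauto
  have idWG2 : W₂ ∪ ((W₁ ∩ (M₁.E ∩ M₂.E)) ∪ (W₂ ∩ (M₁.E ∩ M₂.E))) = S ∩ M₂.E := by
    rw [idS2]
    ext x
    simp only [mem_union, mem_inter_iff]
    tauto
  have idWG2' : W₂ ∩ ((W₁ ∩ (M₁.E ∩ M₂.E)) ∪ (W₂ ∩ (M₁.E ∩ M₂.E))) = W₂ ∩ (M₁.E ∩ M₂.E) := by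
    ext x
    simp only [mem_union, mem_inter_iff]
    tauto
  have idY1 : (Y ∩ Y') ∩ M₁.E = (Y ∩ M₁.E) ∩ (Y' ∩ M₁.E) := by
    ext x; simp only [mem_inter_iff]; tauto
  have idY2 : (Y ∩ Y') ∩ M₂.E = (Y ∩ M₂.E) ∩ (Y' ∩ M₂.E) := by
    ext x; simp only [mem_inter_iff]; tauto
  have idYl : (Y ∩ (M₁.E ∩ M₂.E)) ∩ (Y' ∩ (M₁.E ∩ M₂.E)) = (Y ∩ Y') ∩ (M₁.E ∩ M₂.E) := by
    ext x; simp only [mem_inter_iff]; tauto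
  have hGl : (W₁ ∩ (M₁.E ∩ M₂.E)) ∪ (W₂ ∩ (M₁.E ∩ M₂.E)) ⊆ M₁.E ∩ M₂.E :=
    union_subset inter_subset_right inter_subset_right
  have hYlW : (Y ∩ (M₁.E ∩ M₂.E)) ∪ (Y' ∩ (M₁.E ∩ M₂.E)) ⊆
      (W₁ ∩ (M₁.E ∩ M₂.E)) ∩ (W₂ ∩ (M₁.E ∩ M₂.E)) := by
    rintro x (⟨hx, hxl⟩ | ⟨hx, hxl⟩)
    · exact ⟨⟨hsub₁ (Or.inl ⟨hx, hxl.1⟩), hxl⟩, ⟨hsub₂ (Or.inl ⟨hx, hxl.2⟩), hxl⟩⟩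
    · exact ⟨⟨hsub₁ (Or.inr ⟨hx, hxl.1⟩), hxl⟩, ⟨hsub₂ (Or.inr ⟨hx, hxl.2⟩), hxl⟩⟩
  -- rank inequalities
  have ha : M₁.erank' (S ∩ M₁.E) + M₁.erank' (W₁ ∩ (M₁.E ∩ M₂.E)) ≤
      M₁.erank' W₁ + M₁.erank' ((W₁ ∩ (M₁.E ∩ M₂.E)) ∪ (W₂ ∩ (M₁.E ∩ M₂.E))) := by
    have h := erank'_submod (M := M₁) hW₁E (hGl.trans hlE₁)
    rwa [idWG1, idWG1'] at h
  have hb : M₂.erank' (S ∩ M₂.E) + M₁.erank' (W₂ ∩ (M₁.E ∩ M₂.E)) ≤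
      M₂.erank' W₂ + M₁.erank' ((W₁ ∩ (M₁.E ∩ M₂.E)) ∪ (W₂ ∩ (M₁.E ∩ M₂.E))) := by
    have h := erank'_submod (M := M₂) hW₂E (hGl.trans hlE₂)
    rw [idWG2, idWG2'] at h
    rwa [r2_eq_r1 hres inter_subset_right, r2_eq_r1 hres hGl] at h
  have hFW1 : (M₁ ↾ (M₁.E ∩ M₂.E)).IsFlat (W₁ ∩ (M₁.E ∩ M₂.E)) := by
    rw [hW₁def]
    exact flat_restrict_closure_inter hlE₁ _
  have hFW2 : (M₁ ↾ (M₁.E ∩ M₂.E)).IsFlat (W₂ ∩ (M₁.E ∩ M₂.E)) := by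
    rw [hW₂def, hres]
    exact flat_restrict_closure_inter hlE₂ _
  have hc := modular_flats hres hmod hFW1 hFW2
  have hd := modular_flats hres hmod hfl hfl'
  have hd' : M₁.erank' (Y ∩ (M₁.E ∩ M₂.E)) + M₁.erank' (Y' ∩ (M₁.E ∩ M₂.E)) ≤
      M₁.erank' ((Y ∩ Y') ∩ (M₁.E ∩ M₂.E)) +
        M₁.erank' ((W₁ ∩ (M₁.E ∩ M₂.E)) ∩ (W₂ ∩ (M₁.E ∩ M₂.E))) := by
    rw [hd, idYl]
    exact add_le_add le_rfl (erank'_mono hYlW)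
  have he : M₁.erank' ((Y ∩ Y') ∩ M₁.E) + M₁.erank' W₁ ≤
      M₁.erank' (Y ∩ M₁.E) + M₁.erank' (Y' ∩ M₁.E) := by
    have h := erank'_submod (M := M₁) (inter_subset_right : Y ∩ M₁.E ⊆ M₁.E)
      (inter_subset_right : Y' ∩ M₁.E ⊆ M₁.E)
    rw [← idY1] at h
    have hcl : M₁.erank' ((Y ∩ M₁.E) ∪ (Y' ∩ M₁.E)) = M₁.erank' W₁ :=
      (erank'_closure_eq base₁).symm
    rw [hcl] at h
    calc M₁.erank' ((Y ∩ Y') ∩ M₁.E) + M₁.erank' W₁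
        = M₁.erank' W₁ + M₁.erank' ((Y ∩ Y') ∩ M₁.E) := by abel
      _ ≤ _ := h
  have hf : M₂.erank' ((Y ∩ Y') ∩ M₂.E) + M₂.erank' W₂ ≤
      M₂.erank' (Y ∩ M₂.E) + M₂.erank' (Y' ∩ M₂.E) := by
    have h := erank'_submod (M := M₂) (inter_subset_right : Y ∩ M₂.E ⊆ M₂.E)
      (inter_subset_right : Y' ∩ M₂.E ⊆ M₂.E)
    rw [← idY2] at h
    have hcl : M₂.erank' ((Y ∩ M₂.E) ∪ (Y' ∩ M₂.E)) = M₂.erank' W₂ :=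
      (erank'_closure_eq base₂).symm
    rw [hcl] at h
    calc M₂.erank' ((Y ∩ Y') ∩ M₂.E) + M₂.erank' W₂
        = M₂.erank' W₂ + M₂.erank' ((Y ∩ Y') ∩ M₂.E) := by abel
      _ ≤ _ := h
  -- abbreviations for arithmetic
  set g := M₁.erank' ((W₁ ∩ (M₁.E ∩ M₂.E)) ∪ (W₂ ∩ (M₁.E ∩ M₂.E))) with hgdef
  set w₁ := M₁.erank' (W₁ ∩ (M₁.E ∩ M₂.E)) with hw₁def
  set w₂ := M₁.erank' (W₂ ∩ (M₁.E ∩ M₂.E)) with hw₂def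
  set i := M₁.erank' ((W₁ ∩ (M₁.E ∩ M₂.E)) ∩ (W₂ ∩ (M₁.E ∩ M₂.E))) with hidef
  have hw1g : w₁ ≤ g := erank'_mono subset_union_left
  have hw2g : w₂ ≤ g := erank'_mono subset_union_right
  have hgtop : g ≠ ⊤ := hfinl _ hGl
  have hw1top : w₁ ≠ ⊤ := hfinl _ inter_subset_right
  have hw2top : w₂ ≠ ⊤ := hfinl _ inter_subset_right
  have hA : M₁.erank' (S ∩ M₁.E) ≤ M₁.erank' W₁ + (g - w₁) := by
    have h : M₁.erank' (S ∩ M₁.E) + w₁ ≤ (M₁.erank' W₁ + (g - w₁)) + w₁ := by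
      rw [add_assoc, tsub_add_cancel_of_le hw1g]
      exact ha
    exact (ENat.add_le_add_iff_right hw1top).1 h
  have hB : M₂.erank' (S ∩ M₂.E) ≤ M₂.erank' W₂ + (g - w₂) := by
    have h : M₂.erank' (S ∩ M₂.E) + w₂ ≤ (M₂.erank' W₂ + (g - w₂)) + w₂ := by
      rw [add_assoc, tsub_add_cancel_of_le hw2g]
      exact hb
    exact (ENat.add_le_add_iff_right hw2top).1 h
  have hgid : (g - w₁) + (g - w₂) + i = g := enat_g_identity hgtop hw1g hw2g hc
  -- master inequality
  have master : (M₁.erank' ((Y ∩ Y') ∩ M₁.E) + M₂.erank' ((Y ∩ Y') ∩ M₂.E)) +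
      (M₁.erank' (S ∩ M₁.E) + M₂.erank' (S ∩ M₂.E)) +
      (M₁.erank' (Y ∩ (M₁.E ∩ M₂.E)) + M₁.erank' (Y' ∩ (M₁.E ∩ M₂.E))) ≤
      (M₁.erank' (Y ∩ M₁.E) + M₂.erank' (Y ∩ M₂.E)) +
      (M₁.erank' (Y' ∩ M₁.E) + M₂.erank' (Y' ∩ M₂.E)) +
      (M₁.erank' ((Y ∩ Y') ∩ (M₁.E ∩ M₂.E)) + g) :=
    master_arith hA hB hd' hgid he hf
  refine ⟨S, hYS, hSE, ?_⟩
  have hq : M₁.erank' ((Y ∩ Y') ∩ (M₁.E ∩ M₂.E)) ≠ ⊤ := hfinl _ inter_subset_right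
  have hp : M₁.erank' (Y ∩ (M₁.E ∩ M₂.E)) ≠ ⊤ := hfinl _ inter_subset_right
  have hp' : M₁.erank' (Y' ∩ (M₁.E ∩ M₂.E)) ≠ ⊤ := hfinl _ inter_subset_right
  have goal : aZ M₁ M₂ (Y ∩ Y') + aZ M₁ M₂ S ≤ aZ M₁ M₂ Y + aZ M₁ M₂ Y' := by
    show (M₁.erank' ((Y ∩ Y') ∩ M₁.E) + M₂.erank' ((Y ∩ Y') ∩ M₂.E)
        - M₁.erank' ((Y ∩ Y') ∩ (M₁.E ∩ M₂.E))) +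
      (M₁.erank' (S ∩ M₁.E) + M₂.erank' (S ∩ M₂.E) - M₁.erank' (S ∩ (M₁.E ∩ M₂.E))) ≤
      (M₁.erank' (Y ∩ M₁.E) + M₂.erank' (Y ∩ M₂.E) - M₁.erank' (Y ∩ (M₁.E ∩ M₂.E))) +
      (M₁.erank' (Y' ∩ M₁.E) + M₂.erank' (Y' ∩ M₂.E) - M₁.erank' (Y' ∩ (M₁.E ∩ M₂.E)))
    rw [idSl]
    exact enat_cancel_sub hq hgtop hp hp' (rl_le_sum M₁ M₂ (Y ∩ Y'))
      (by rw [← idSl]; exact rl_le_sum M₁ M₂ S) (rl_le_sum M₁ M₂ Y) (rl_le_sum M₁ M₂ Y') master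
  exact goal
end AmalgamProof

namespace AmalgamProof
open Set Matroid
variable {α : Type*} {M₁ M₂ : Matroid α} {X Y J K I F : Set α} {e : α}

lemma amalRank_empty (M₁ M₂ : Matroid α) : amalRank M₁ M₂ ∅ = 0 := by
  refine le_antisymm ?_ zero_le
  have h := amalRank_le_aZ (M₁ := M₁) (M₂ := M₂) (Subset.rfl : (∅ : Set α) ⊆ ∅) (empty_subset _)
  simpa [aZ, empty_inter, erank'_empty] using h

section ctx
variable (hres : M₁ ↾ (M₁.E ∩ M₂.E) = M₂ ↾ (M₁.E ∩ M₂.E))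
    (hfin : M₁.erank' (M₁.E ∩ M₂.E) ≠ ⊤)
include hres hfin

lemma amalRank_insert_le (hX : X ⊆ M₁.E ∪ M₂.E) (he : e ∈ M₁.E ∪ M₂.E) :
    amalRank M₁ M₂ (insert e X) ≤ amalRank M₁ M₂ X + 1 := by
  obtain ⟨Y, hXY, hYE, hY⟩ := exists_min_aZ (M₁ := M₁) (M₂ := M₂) hX
  have hfinl : ∀ Z : Set α, Z ⊆ M₁.E ∩ M₂.E → M₁.erank' Z ≠ ⊤ :=
    fun Z hZ => ne_top_of_le_ne_top hfin (erank'_mono hZ)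
  have hkey : aZ M₁ M₂ (insert e Y) ≤ aZ M₁ M₂ Y + 1 := by
    have hadd := aZ_add_rl M₁ M₂ Y
    rw [aZ]
    rw [tsub_le_iff_right]
    by_cases he1 : e ∈ M₁.E <;> by_cases he2 : e ∈ M₂.E
    · -- e ∈ ℓ
      have id1 : insert e Y ∩ M₁.E = insert e (Y ∩ M₁.E) := by
        ext x; simp only [mem_insert_iff, mem_inter_iff]; constructor
        · rintro ⟨rfl | hx, hxE⟩
          · exact Or.inl rfl
          · exact Or.inr ⟨hx, hxE⟩
        · rintro (rfl | ⟨hx, hxE⟩)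
          · exact ⟨Or.inl rfl, he1⟩
          · exact ⟨Or.inr hx, hxE⟩
      have id2 : insert e Y ∩ M₂.E = insert e (Y ∩ M₂.E) := by
        ext x; simp only [mem_insert_iff, mem_inter_iff]; constructor
        · rintro ⟨rfl | hx, hxE⟩
          · exact Or.inl rfl
          · exact Or.inr ⟨hx, hxE⟩
        · rintro (rfl | ⟨hx, hxE⟩)
          · exact ⟨Or.inl rfl, he2⟩
          · exact ⟨Or.inr hx, hxE⟩
      have idl : insert e Y ∩ (M₁.E ∩ M₂.E) = insert e (Y ∩ (M₁.E ∩ M₂.E)) := by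
        ext x; simp only [mem_insert_iff, mem_inter_iff]; constructor
        · rintro ⟨rfl | hx, hxE⟩
          · exact Or.inl rfl
          · exact Or.inr ⟨hx, hxE⟩
        · rintro (rfl | ⟨hx, hxE⟩)
          · exact ⟨Or.inl rfl, he1, he2⟩
          · exact ⟨Or.inr hx, hxE⟩
      rw [id1, id2, idl]
      by_cases hcl : e ∈ M₁.closure (Y ∩ (M₁.E ∩ M₂.E))
      · have r1eq : M₁.erank' (insert e (Y ∩ M₁.E)) = M₁.erank' (Y ∩ M₁.E) :=
          erank'_insert_eq_of_mem_closure inter_subset_right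
            (M₁.closure_subset_closure
              (inter_subset_inter_right Y inter_subset_left) hcl)
        have r2eq : M₂.erank' (insert e (Y ∩ M₂.E)) = M₂.erank' (Y ∩ M₂.E) := by
          have hcl2 : e ∈ M₂.closure (Y ∩ (M₁.E ∩ M₂.E)) :=
            cl12 hres inter_subset_right ⟨he1, he2⟩ hcl
          exact erank'_insert_eq_of_mem_closure inter_subset_right
            (M₂.closure_subset_closure
              (inter_subset_inter_right Y inter_subset_right) hcl2)
        have rleq : M₁.erank' (insert e (Y ∩ (M₁.E ∩ M₂.E))) =
            M₁.erank' (Y ∩ (M₁.E ∩ M₂.E)) :=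
          erank'_insert_eq_of_mem_closure (inter_subset_right.trans inter_subset_left) hcl
        rw [r1eq, r2eq, rleq, ← hadd]
        calc aZ M₁ M₂ Y + M₁.erank' (Y ∩ (M₁.E ∩ M₂.E))
            ≤ aZ M₁ M₂ Y + 1 + M₁.erank' (Y ∩ (M₁.E ∩ M₂.E)) := by
              exact add_le_add_left le_self_add _
          _ = _ := rfl
      · have rlup : M₁.erank' (insert e (Y ∩ (M₁.E ∩ M₂.E))) =
            M₁.erank' (Y ∩ (M₁.E ∩ M₂.E)) + 1 := by
          refine le_antisymm erank'_insert_le ?_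
          rw [ENat.add_one_le_iff (hfinl _ inter_subset_right)]
          refine lt_of_le_of_ne (erank'_mono (subset_insert _ _)) fun hEq => hcl ?_
          exact mem_closure_of_erank' (inter_subset_right.trans inter_subset_left) he1
            (hfinl _ inter_subset_right) hEq.symm.le
        rw [rlup]
        calc M₁.erank' (insert e (Y ∩ M₁.E)) + M₂.erank' (insert e (Y ∩ M₂.E))
            ≤ (M₁.erank' (Y ∩ M₁.E) + 1) + (M₂.erank' (Y ∩ M₂.E) + 1) :=
              add_le_add erank'_insert_le erank'_insert_le
          _ = (M₁.erank' (Y ∩ M₁.E) + M₂.erank' (Y ∩ M₂.E)) + 2 := by ring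
          _ = (aZ M₁ M₂ Y + M₁.erank' (Y ∩ (M₁.E ∩ M₂.E))) + 2 := by rw [hadd]
          _ = aZ M₁ M₂ Y + 1 + (M₁.erank' (Y ∩ (M₁.E ∩ M₂.E)) + 1) := by abel
    · -- e ∈ M₁.E only
      have id1 : insert e Y ∩ M₁.E = insert e (Y ∩ M₁.E) := by
        ext x; simp only [mem_insert_iff, mem_inter_iff]; constructor
        · rintro ⟨rfl | hx, hxE⟩
          · exact Or.inl rfl
          · exact Or.inr ⟨hx, hxE⟩
        · rintro (rfl | ⟨hx, hxE⟩)
          · exact ⟨Or.inl rfl, he1⟩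
          · exact ⟨Or.inr hx, hxE⟩
      have id2 : insert e Y ∩ M₂.E = Y ∩ M₂.E := by
        ext x; simp only [mem_insert_iff, mem_inter_iff]; constructor
        · rintro ⟨rfl | hx, hxE⟩
          · exact absurd hxE he2
          · exact ⟨hx, hxE⟩
        · rintro ⟨hx, hxE⟩; exact ⟨Or.inr hx, hxE⟩
      have idl : insert e Y ∩ (M₁.E ∩ M₂.E) = Y ∩ (M₁.E ∩ M₂.E) := by
        ext x; simp only [mem_insert_iff, mem_inter_iff]; constructor
        · rintro ⟨rfl | hx, hxE⟩
          · exact absurd hxE.2 he2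
          · exact ⟨hx, hxE⟩
        · rintro ⟨hx, hxE⟩; exact ⟨Or.inr hx, hxE⟩
      rw [id1, id2, idl]
      calc M₁.erank' (insert e (Y ∩ M₁.E)) + M₂.erank' (Y ∩ M₂.E)
          ≤ (M₁.erank' (Y ∩ M₁.E) + 1) + M₂.erank' (Y ∩ M₂.E) :=
            add_le_add_left erank'_insert_le _
        _ = (M₁.erank' (Y ∩ M₁.E) + M₂.erank' (Y ∩ M₂.E)) + 1 := by abel
        _ = (aZ M₁ M₂ Y + M₁.erank' (Y ∩ (M₁.E ∩ M₂.E))) + 1 := by rw [hadd]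
        _ = aZ M₁ M₂ Y + 1 + M₁.erank' (Y ∩ (M₁.E ∩ M₂.E)) := by abel
    · -- e ∈ M₂.E only
      have id1 : insert e Y ∩ M₁.E = Y ∩ M₁.E := by
        ext x; simp only [mem_insert_iff, mem_inter_iff]; constructor
        · rintro ⟨rfl | hx, hxE⟩
          · exact absurd hxE he1
          · exact ⟨hx, hxE⟩
        · rintro ⟨hx, hxE⟩; exact ⟨Or.inr hx, hxE⟩
      have id2 : insert e Y ∩ M₂.E = insert e (Y ∩ M₂.E) := by
        ext x; simp only [mem_insert_iff, mem_inter_iff]; constructor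
        · rintro ⟨rfl | hx, hxE⟩
          · exact Or.inl rfl
          · exact Or.inr ⟨hx, hxE⟩
        · rintro (rfl | ⟨hx, hxE⟩)
          · exact ⟨Or.inl rfl, he2⟩
          · exact ⟨Or.inr hx, hxE⟩
      have idl : insert e Y ∩ (M₁.E ∩ M₂.E) = Y ∩ (M₁.E ∩ M₂.E) := by
        ext x; simp only [mem_insert_iff, mem_inter_iff]; constructor
        · rintro ⟨rfl | hx, hxE⟩
          · exact absurd hxE.1 he1
          · exact ⟨hx, hxE⟩
        · rintro ⟨hx, hxE⟩; exact ⟨Or.inr hx, hxE⟩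
      rw [id1, id2, idl]
      calc M₁.erank' (Y ∩ M₁.E) + M₂.erank' (insert e (Y ∩ M₂.E))
          ≤ M₁.erank' (Y ∩ M₁.E) + (M₂.erank' (Y ∩ M₂.E) + 1) :=
            add_le_add_right erank'_insert_le _
        _ = (M₁.erank' (Y ∩ M₁.E) + M₂.erank' (Y ∩ M₂.E)) + 1 := by abel
        _ = (aZ M₁ M₂ Y + M₁.erank' (Y ∩ (M₁.E ∩ M₂.E))) + 1 := by rw [hadd]
        _ = aZ M₁ M₂ Y + 1 + M₁.erank' (Y ∩ (M₁.E ∩ M₂.E)) := by abel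
    · rcases he with h | h
      · exact absurd h he1
      · exact absurd h he2
  calc amalRank M₁ M₂ (insert e X) ≤ aZ M₁ M₂ (insert e Y) :=
      amalRank_le_aZ (insert_subset_insert hXY) (insert_subset he hYE)
    _ ≤ aZ M₁ M₂ Y + 1 := hkey
    _ = amalRank M₁ M₂ X + 1 := by rw [hY]

lemma amalRank_submod (hmod : (M₁ ↾ (M₁.E ∩ M₂.E)).IsModular')
    (hX : X ⊆ M₁.E ∪ M₂.E) (hX' : Y ⊆ M₁.E ∪ M₂.E) :
    amalRank M₁ M₂ (X ∪ Y) + amalRank M₁ M₂ (X ∩ Y) ≤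
      amalRank M₁ M₂ X + amalRank M₁ M₂ Y := by
  obtain ⟨Z, hXZ, hZE, hZ, hZfl⟩ := exists_closed_min hres hX
  obtain ⟨Z', hXZ', hZ'E, hZ', hZ'fl⟩ := exists_closed_min hres hX'
  obtain ⟨S, hZZS, hSE, hsub⟩ := aZ_submod hres hfin hmod hZE hZ'E hZfl hZ'fl
  calc amalRank M₁ M₂ (X ∪ Y) + amalRank M₁ M₂ (X ∩ Y)
      ≤ aZ M₁ M₂ S + aZ M₁ M₂ (Z ∩ Z') :=
        add_le_add (amalRank_le_aZ ((union_subset_union hXZ hXZ').trans hZZS) hSE)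
          (amalRank_le_aZ (inter_subset_inter hXZ hXZ') (inter_subset_left.trans hZE))
    _ = aZ M₁ M₂ (Z ∩ Z') + aZ M₁ M₂ S := by abel
    _ ≤ aZ M₁ M₂ Z + aZ M₁ M₂ Z' := hsub
    _ = amalRank M₁ M₂ X + amalRank M₁ M₂ Y := by rw [hZ, hZ']

end ctx
end AmalgamProof

namespace AmalgamProof
open Set Matroid
variable {α : Type*} {M₁ M₂ : Matroid α} {X Y J K I F : Set α} {e : α}

section ctx2
variable (hres : M₁ ↾ (M₁.E ∩ M₂.E) = M₂ ↾ (M₁.E ∩ M₂.E))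
    (hfin : M₁.erank' (M₁.E ∩ M₂.E) ≠ ⊤)
    (hmod : (M₁ ↾ (M₁.E ∩ M₂.E)).IsModular')
include hres hfin hmod

lemma exists_insert_rank_increase (hX : X ⊆ M₁.E ∪ M₂.E) (hJ : J ⊆ M₁.E ∪ M₂.E)
    (hJfin : amalRank M₁ M₂ J ≠ ⊤) (hlt : amalRank M₁ M₂ J < amalRank M₁ M₂ X) :
    ∃ e ∈ X, amalRank M₁ M₂ (insert e J) = amalRank M₁ M₂ J + 1 := by
  by_contra hcon
  push_neg at hcon
  have hflat : ∀ e ∈ X, amalRank M₁ M₂ (insert e J) = amalRank M₁ M₂ J := by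
    intro e heX
    refine le_antisymm ?_ (amalRank_mono (subset_insert _ _))
    have h2 : amalRank M₁ M₂ (insert e J) ≤ amalRank M₁ M₂ J + 1 :=
      amalRank_insert_le hres hfin hJ (hX heX)
    rcases lt_or_eq_of_le h2 with h | h
    · exact (ENat.lt_add_one_iff hJfin).1 h
    · exact absurd h (hcon e heX)
  set P := {Y | J ⊆ Y ∧ Y ⊆ M₁.E ∪ M₂.E ∧ aZ M₁ M₂ Y = amalRank M₁ M₂ J ∧
    (M₁ ↾ (M₁.E ∩ M₂.E)).IsFlat (Y ∩ (M₁.E ∩ M₂.E))} with hPdef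
  obtain ⟨Y₀, hJY₀, hY₀E, hY₀eq, hY₀fl⟩ := exists_closed_min hres hJ
  have hY₀P : Y₀ ∈ P := ⟨hJY₀, hY₀E, hY₀eq, hY₀fl⟩
  have hfinl : ∀ Z : Set α, Z ⊆ M₁.E ∩ M₂.E → M₁.erank' Z ≠ ⊤ :=
    fun Z hZ => ne_top_of_le_ne_top hfin (erank'_mono hZ)
  have hchain : ∀ c ⊆ P, IsChain (· ⊆ ·) c → c.Nonempty → ∃ ub ∈ P, ∀ s ∈ c, s ⊆ ub := by
    intro c hcP hc hcne
    set U := ⋃₀ c with hUdef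
    have hJU : J ⊆ U := by
      obtain ⟨Y₁, hY₁⟩ := hcne
      exact (hcP hY₁).1.trans (subset_sUnion_of_mem hY₁)
    have hUE : U ⊆ M₁.E ∪ M₂.E := sUnion_subset fun Y hY => (hcP hY).2.1
    have hbnd : amalRank M₁ M₂ J + M₁.erank' (M₁.E ∩ M₂.E) ≠ ⊤ := by
      intro h
      rcases WithTop.add_eq_top.1 h with h' | h'
      · exact hJfin h'
      · exact hfin h'
    have hb1 : ∀ Y ∈ c, M₁.erank' (Y ∩ M₁.E) ≤
        amalRank M₁ M₂ J + M₁.erank' (M₁.E ∩ M₂.E) := by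
      intro Y hY
      calc M₁.erank' (Y ∩ M₁.E) ≤ M₁.erank' (Y ∩ M₁.E) + M₂.erank' (Y ∩ M₂.E) := le_self_add
        _ = aZ M₁ M₂ Y + M₁.erank' (Y ∩ (M₁.E ∩ M₂.E)) := (aZ_add_rl M₁ M₂ Y).symm
        _ = amalRank M₁ M₂ J + M₁.erank' (Y ∩ (M₁.E ∩ M₂.E)) := by rw [(hcP hY).2.2.1]
        _ ≤ amalRank M₁ M₂ J + M₁.erank' (M₁.E ∩ M₂.E) :=
            add_le_add_right (erank'_mono inter_subset_right) _
    have hb2 : ∀ Y ∈ c, M₂.erank' (Y ∩ M₂.E) ≤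
        amalRank M₁ M₂ J + M₁.erank' (M₁.E ∩ M₂.E) := by
      intro Y hY
      calc M₂.erank' (Y ∩ M₂.E) ≤ M₁.erank' (Y ∩ M₁.E) + M₂.erank' (Y ∩ M₂.E) := le_add_self
        _ = aZ M₁ M₂ Y + M₁.erank' (Y ∩ (M₁.E ∩ M₂.E)) := (aZ_add_rl M₁ M₂ Y).symm
        _ = amalRank M₁ M₂ J + M₁.erank' (Y ∩ (M₁.E ∩ M₂.E)) := by rw [(hcP hY).2.2.1]
        _ ≤ amalRank M₁ M₂ J + M₁.erank' (M₁.E ∩ M₂.E) :=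
            add_le_add_right (erank'_mono inter_subset_right) _
    have hC1 : IsChain (· ⊆ ·) ((· ∩ M₁.E) '' c) := by
      refine IsChain.image_of_map_rel _ _ _ ?_ hc
      exact fun _ _ h => inter_subset_inter_left _ h
    have hC2 : IsChain (· ⊆ ·) ((· ∩ M₂.E) '' c) := by
      refine IsChain.image_of_map_rel _ _ _ ?_ hc
      exact fun _ _ h => inter_subset_inter_left _ h
    have hU1 : U ∩ M₁.E = ⋃₀ ((· ∩ M₁.E) '' c) := by
      rw [sUnion_image]
      ext x
      simp only [mem_inter_iff, mem_sUnion, mem_iUnion]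
      constructor
      · rintro ⟨⟨Y, hY, hxY⟩, hxE⟩
        exact ⟨Y, hY, hxY, hxE⟩
      · rintro ⟨Y, hY, hxY, hxE⟩
        exact ⟨⟨Y, hY, hxY⟩, hxE⟩
    have hU2 : U ∩ M₂.E = ⋃₀ ((· ∩ M₂.E) '' c) := by
      rw [sUnion_image]
      ext x
      simp only [mem_inter_iff, mem_sUnion, mem_iUnion]
      constructor
      · rintro ⟨⟨Y, hY, hxY⟩, hxE⟩
        exact ⟨Y, hY, hxY, hxE⟩
      · rintro ⟨Y, hY, hxY, hxE⟩
        exact ⟨⟨Y, hY, hxY⟩, hxE⟩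
    have hr1 : M₁.erank' (U ∩ M₁.E) ≤ amalRank M₁ M₂ J + M₁.erank' (M₁.E ∩ M₂.E) := by
      rw [hU1]
      refine erank'_sUnion_chain_le hC1 ?_ hbnd
      rintro Z ⟨Y, hY, rfl⟩
      exact hb1 Y hY
    have hr2 : M₂.erank' (U ∩ M₂.E) ≤ amalRank M₁ M₂ J + M₁.erank' (M₁.E ∩ M₂.E) := by
      rw [hU2]
      refine erank'_sUnion_chain_le hC2 ?_ hbnd
      rintro Z ⟨Y, hY, rfl⟩
      exact hb2 Y hY
    have haZU : aZ M₁ M₂ U = amalRank M₁ M₂ J := by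
      refine le_antisymm ?_ (amalRank_le_aZ hJU hUE)
      rw [aZ, tsub_le_iff_right]
      obtain ⟨I₁, hI₁⟩ := M₁.exists_isBasis' (U ∩ M₁.E)
      obtain ⟨I₂, hI₂⟩ := M₂.exists_isBasis' (U ∩ M₂.E)
      have hc1 : M₁.erank' (U ∩ M₁.E) = I₁.encard := hI₁.erank'_eq
      have hc2 : M₂.erank' (U ∩ M₂.E) = I₂.encard := hI₂.erank'_eq
      have hI₁fin : I₁.Finite := by
        rw [← encard_ne_top_iff, ← hc1]
        exact ne_top_of_le_ne_top hbnd hr1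
      have hI₂fin : I₂.Finite := by
        rw [← encard_ne_top_iff, ← hc2]
        exact ne_top_of_le_ne_top hbnd hr2
      rw [hc1, hc2]
      rcases (I₁ ∪ I₂).eq_empty_or_nonempty with hKe | hKne
      · rw [union_empty_iff] at hKe
        rw [hKe.1, hKe.2]
        simp
      · obtain ⟨Z, hZc, hKZ⟩ := exists_mem_chain_of_finite hc (hI₁fin.union hI₂fin) hKne
          (union_subset (hI₁.subset.trans inter_subset_left)
            (hI₂.subset.trans inter_subset_left))
        have hle1 : I₁.encard ≤ M₁.erank' (Z ∩ M₁.E) :=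
          le_erank'_of hI₁.indep
            (subset_inter (subset_union_left.trans hKZ) (hI₁.subset.trans inter_subset_right))
        have hle2 : I₂.encard ≤ M₂.erank' (Z ∩ M₂.E) :=
          le_erank'_of hI₂.indep
            (subset_inter (subset_union_right.trans hKZ) (hI₂.subset.trans inter_subset_right))
        calc I₁.encard + I₂.encard ≤ M₁.erank' (Z ∩ M₁.E) + M₂.erank' (Z ∩ M₂.E) :=
            add_le_add hle1 hle2
          _ = aZ M₁ M₂ Z + M₁.erank' (Z ∩ (M₁.E ∩ M₂.E)) := (aZ_add_rl M₁ M₂ Z).symm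
          _ = amalRank M₁ M₂ J + M₁.erank' (Z ∩ (M₁.E ∩ M₂.E)) := by rw [(hcP hZc).2.2.1]
          _ ≤ amalRank M₁ M₂ J + M₁.erank' (U ∩ (M₁.E ∩ M₂.E)) :=
            add_le_add_right
              (erank'_mono (inter_subset_inter_left _ (subset_sUnion_of_mem hZc))) _
    obtain ⟨Ut, hUUt, hUtE, hUtle, hUtfl⟩ := tld_spec hres hUE
    have hUt_eq : aZ M₁ M₂ Ut = amalRank M₁ M₂ J :=
      le_antisymm (haZU ▸ hUtle) (amalRank_le_aZ (hJU.trans hUUt) hUtE)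
    exact ⟨Ut, ⟨hJU.trans hUUt, hUtE, hUt_eq, hUtfl⟩,
      fun s hs => (subset_sUnion_of_mem hs).trans hUUt⟩
  obtain ⟨Ym, _, hYmMax⟩ := zorn_subset_nonempty P hchain Y₀ hY₀P
  have hYmP : Ym ∈ P := hYmMax.prop
  have hXYm : X ⊆ Ym := by
    intro e heX
    obtain ⟨Ye, hYe1, hYe2, hYe3, hYe4⟩ := exists_closed_min hres
      (show insert e J ⊆ M₁.E ∪ M₂.E from insert_subset (hX heX) hJ)
    rw [hflat e heX] at hYe3
    obtain ⟨S, hSsub, hSE, hsub⟩ := aZ_submod hres hfin hmod hYmP.2.1 hYe2 hYmP.2.2.2 hYe4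
    rw [hYmP.2.2.1, hYe3] at hsub
    have h1 : amalRank M₁ M₂ J ≤ aZ M₁ M₂ (Ym ∩ Ye) :=
      amalRank_le_aZ (subset_inter hYmP.1 ((subset_insert e J).trans hYe1))
        (inter_subset_left.trans hYmP.2.1)
    have h2 : amalRank M₁ M₂ J ≤ aZ M₁ M₂ S :=
      amalRank_le_aZ (hYmP.1.trans (subset_union_left.trans hSsub)) hSE
    have hSeq : aZ M₁ M₂ S = amalRank M₁ M₂ J := by
      refine le_antisymm ?_ h2
      have hh : amalRank M₁ M₂ J + aZ M₁ M₂ S ≤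
          amalRank M₁ M₂ J + amalRank M₁ M₂ J :=
        le_trans (add_le_add_left h1 _) hsub
      exact (ENat.add_le_add_iff_left hJfin).1 hh
    obtain ⟨St, hSSt, hStE, hStle, hStfl⟩ := tld_spec hres hSE
    have hSt_eq : aZ M₁ M₂ St = amalRank M₁ M₂ J :=
      le_antisymm (hSeq ▸ hStle)
        (amalRank_le_aZ ((hYmP.1.trans (subset_union_left.trans hSsub)).trans hSSt) hStE)
    have hStP : St ∈ P :=
      ⟨(hYmP.1.trans (subset_union_left.trans hSsub)).trans hSSt, hStE, hSt_eq, hStfl⟩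
    have hYmSt : Ym ⊆ St := (subset_union_left.trans hSsub).trans hSSt
    have hStYm : St ⊆ Ym := hYmMax.2 hStP hYmSt
    exact hStYm (hSSt (hSsub (Or.inr (hYe1 (mem_insert e J)))))
  exact absurd hlt (not_lt.2 ((amalRank_le_aZ hXYm hYmP.2.1).trans_eq hYmP.2.2.1))

end ctx2
end AmalgamProof

namespace AmalgamProof
open Set Matroid
variable {α : Type*} {M₁ M₂ : Matroid α} {X Y J K I F : Set α} {e : α}

section ctx3
variable (hres : M₁ ↾ (M₁.E ∩ M₂.E) = M₂ ↾ (M₁.E ∩ M₂.E))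
    (hfin : M₁.erank' (M₁.E ∩ M₂.E) ≠ ⊤)
include hres hfin

lemma amalRank_le_encard (hXfin : X.Finite) (hX : X ⊆ M₁.E ∪ M₂.E) :
    amalRank M₁ M₂ X ≤ X.encard := by
  refine Set.Finite.induction_on
    (motive := fun s _ => s ⊆ M₁.E ∪ M₂.E → amalRank M₁ M₂ s ≤ s.encard) _ hXfin
    (fun _ => by simp [amalRank_empty]) ?_ hX
  intro a s ha _ IH hsub
  have hsE : s ⊆ M₁.E ∪ M₂.E := (subset_insert a s).trans hsub
  calc amalRank M₁ M₂ (insert a s) ≤ amalRank M₁ M₂ s + 1 :=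
      amalRank_insert_le hres hfin hsE (hsub (mem_insert a s))
    _ ≤ s.encard + 1 := add_le_add_left (IH hsE) 1
    _ = (insert a s).encard := (encard_insert_of_notMem ha).symm

lemma amalRank_union_finite_le (hI : I ⊆ M₁.E ∪ M₂.E) (hFfin : F.Finite)
    (hF : F ⊆ M₁.E ∪ M₂.E) :
    amalRank M₁ M₂ (I ∪ F) ≤ amalRank M₁ M₂ I + F.encard := by
  refine Set.Finite.induction_on
    (motive := fun s _ => s ⊆ M₁.E ∪ M₂.E → amalRank M₁ M₂ (I ∪ s) ≤ amalRank M₁ M₂ I + s.encard)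
    _ hFfin (fun _ => by simp) ?_ hF
  intro a s ha _ IH hsub
  have hsE : s ⊆ M₁.E ∪ M₂.E := (subset_insert a s).trans hsub
  rw [union_insert]
  calc amalRank M₁ M₂ (insert a (I ∪ s)) ≤ amalRank M₁ M₂ (I ∪ s) + 1 :=
      amalRank_insert_le hres hfin (union_subset hI hsE) (hsub (mem_insert a s))
    _ ≤ amalRank M₁ M₂ I + s.encard + 1 := add_le_add_left (IH hsE) 1
    _ = amalRank M₁ M₂ I + (insert a s).encard := by
        rw [encard_insert_of_notMem ha, add_assoc]

lemma full_rank_mono (hJ : J ⊆ M₁.E ∪ M₂.E) (hJfin : J.Finite)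
    (hfull : amalRank M₁ M₂ J = J.encard) (hK : K ⊆ J) :
    amalRank M₁ M₂ K = K.encard := by
  have h1 : amalRank M₁ M₂ (K ∪ (J \ K)) ≤ amalRank M₁ M₂ K + (J \ K).encard :=
    amalRank_union_finite_le hres hfin (hK.trans hJ) hJfin.diff (diff_subset.trans hJ)
  rw [union_diff_cancel hK] at h1
  have h2 : (J \ K).encard + K.encard = J.encard := encard_diff_add_encard_of_subset hK
  have hd : (J \ K).encard ≠ ⊤ := hJfin.diff.encard_lt_top.ne
  have h3 : K.encard + (J \ K).encard ≤ amalRank M₁ M₂ K + (J \ K).encard := by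
    rw [add_comm K.encard, h2, ← hfull]
    exact h1
  exact le_antisymm (amalRank_le_encard hres hfin (hJfin.subset hK) (hK.trans hJ))
    ((ENat.add_le_add_iff_right hd).1 h3)

lemma flat_step (hmod : (M₁ ↾ (M₁.E ∩ M₂.E)).IsModular') (hI : I ⊆ M₁.E ∪ M₂.E)
    (hρ : amalRank M₁ M₂ I ≠ ⊤) (hFfin : F.Finite) (hF : F ⊆ M₁.E ∪ M₂.E)
    (h : ∀ e ∈ F, amalRank M₁ M₂ (insert e I) = amalRank M₁ M₂ I) :
    amalRank M₁ M₂ (I ∪ F) = amalRank M₁ M₂ I := by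
  refine Set.Finite.induction_on
    (motive := fun s _ => (∀ e ∈ s, amalRank M₁ M₂ (insert e I) = amalRank M₁ M₂ I) →
      s ⊆ M₁.E ∪ M₂.E → amalRank M₁ M₂ (I ∪ s) = amalRank M₁ M₂ I)
    _ hFfin (fun _ _ => by rw [union_empty]) ?_ h hF
  intro a s ha _ IH h' hsub
  have hsE : s ⊆ M₁.E ∪ M₂.E := (subset_insert a s).trans hsub
  have hIs : amalRank M₁ M₂ (I ∪ s) = amalRank M₁ M₂ I :=
    IH (fun e he => h' e (mem_insert_of_mem _ he)) hsE
  have hsubmod := amalRank_submod hres hfin hmod (union_subset hI hsE)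
    (insert_subset (hsub (mem_insert a s)) hI)
  have idU : (I ∪ s) ∪ insert a I = insert a (I ∪ s) := by
    ext x; simp only [mem_union, mem_insert_iff]; tauto
  rw [idU, hIs, h' a (mem_insert a s)] at hsubmod
  have hT : amalRank M₁ M₂ I ≤ amalRank M₁ M₂ ((I ∪ s) ∩ insert a I) :=
    amalRank_mono (subset_inter subset_union_left (subset_insert a I))
  have hfin2 : amalRank M₁ M₂ (insert a (I ∪ s)) + amalRank M₁ M₂ I ≤
      amalRank M₁ M₂ I + amalRank M₁ M₂ I :=
    le_trans (add_le_add_right hT _) hsubmod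
  have hle : amalRank M₁ M₂ (insert a (I ∪ s)) ≤ amalRank M₁ M₂ I :=
    (ENat.add_le_add_iff_right hρ).1 hfin2
  rw [union_insert]
  exact le_antisymm hle (amalRank_mono (subset_union_left.trans (subset_insert _ _)))

lemma exists_full_subset (hmod : (M₁ ↾ (M₁.E ∩ M₂.E)).IsModular')
    (hX : X ⊆ M₁.E ∪ M₂.E) (n : ℕ) (hn : (n : ℕ∞) ≤ amalRank M₁ M₂ X) :
    ∃ K, K ⊆ X ∧ K.Finite ∧ K.encard = n ∧ amalRank M₁ M₂ K = n := by
  induction n with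
  | zero => exact ⟨∅, empty_subset _, finite_empty, by simp, by simp [amalRank_empty]⟩
  | succ m IH =>
    obtain ⟨K, hKX, hKfin, hKcard, hKrank⟩ := IH
      (le_trans (by exact_mod_cast Nat.le_succ m) hn)
    have hlt : amalRank M₁ M₂ K < amalRank M₁ M₂ X := by
      rw [hKrank]
      exact lt_of_lt_of_le (by exact_mod_cast Nat.lt_succ_self m) hn
    obtain ⟨e, heX, hee⟩ := exists_insert_rank_increase hres hfin hmod hX (hKX.trans hX)
      (by rw [hKrank]; exact ENat.coe_ne_top m) hlt
    have heK : e ∉ K := by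
      intro h
      rw [insert_eq_self.2 h, hKrank] at hee
      exact absurd hee (by norm_cast; omega)
    refine ⟨insert e K, insert_subset heX hKX, hKfin.insert e, ?_, ?_⟩
    · rw [encard_insert_of_notMem heK, hKcard]
      norm_cast
    · rw [hee, hKrank]
      norm_cast

end ctx3
end AmalgamProof

/-- If `M₁` and `M₂` are simple matroids on ground sets `E₁`, `E₂` with
`ℓ = E₁ ∩ E₂`, such that `M₁|ℓ = M₂|ℓ` and this common restriction is modular, then
the proper-amalgam rank formula is the rank function of a matroid on `E₁ ∪ E₂`. -/
theorem properAmalgam_exists {α : Type*} (M₁ M₂ : Matroid α)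
    (h₁ : M₁.IsSimple') (h₂ : M₂.IsSimple')
    (hres : M₁ ↾ (M₁.E ∩ M₂.E) = M₂ ↾ (M₁.E ∩ M₂.E))
    (hmod : (M₁ ↾ (M₁.E ∩ M₂.E)).IsModular') :
    ∃ M : Matroid α, M.E = M₁.E ∪ M₂.E ∧
      ∀ X ⊆ M₁.E ∪ M₂.E, M.erank' X = amalRank M₁ M₂ X := by
  classical
  by_cases hfin : M₁.erank' (M₁.E ∩ M₂.E) = ⊤
  · -- degenerate case : the common restriction has infinite rank, so `amalRank ≡ 0`
    refine ⟨Matroid.loopyOn (M₁.E ∪ M₂.E), rfl, fun X hX => ?_⟩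
    have h0 : (Matroid.loopyOn (M₁.E ∪ M₂.E)).erank' X = 0 := by
      refine le_antisymm (Matroid.erank'_le_iff.2 fun I hI _ => ?_) zero_le
      rw [Matroid.loopyOn_indep_iff] at hI
      subst hI
      simp
    rw [h0]
    refine (le_antisymm ?_ zero_le).symm
    have hle := AmalgamProof.amalRank_le_aZ (M₁ := M₁) (M₂ := M₂)
      (subset_union_left : X ⊆ X ∪ (M₁.E ∩ M₂.E))
      (union_subset hX (inter_subset_left.trans subset_union_left))
    refine hle.trans ?_
    have hidl : (X ∪ (M₁.E ∩ M₂.E)) ∩ (M₁.E ∩ M₂.E) = M₁.E ∩ M₂.E := by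
      ext x
      exact ⟨fun h => h.2, fun h => ⟨Or.inr h, h⟩⟩
    unfold AmalgamProof.aZ
    rw [hidl, hfin]
    exact (tsub_eq_zero_of_le (le_top : _ ≤ (⊤ : ℕ∞))).le
  · -- main case
    set E := M₁.E ∪ M₂.E with hE
    set Ind : Set α → Prop := fun I => I ⊆ E ∧
      ∀ K, K ⊆ I → K.Finite → amalRank M₁ M₂ K = K.encard with hInd
    have ind_empty : Ind ∅ := ⟨empty_subset _, fun K hK _ => by
      rw [subset_empty_iff] at hK
      subst hK
      simp [AmalgamProof.amalRank_empty]⟩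
    have ind_subset : ∀ ⦃I J⦄, Ind J → I ⊆ J → Ind I :=
      fun I J hJ hIJ => ⟨hIJ.trans hJ.1, fun K hK hKfin => hJ.2 K (hK.trans hIJ) hKfin⟩
    have ind_aug : ∀ ⦃I J⦄, Ind I → I.Finite → Ind J → J.Finite → I.ncard < J.ncard →
        ∃ e ∈ J, e ∉ I ∧ Ind (insert e I) := by
      intro I J hI hIfin hJ hJfin hlt
      have hρI : amalRank M₁ M₂ I = I.encard := hI.2 I Subset.rfl hIfin
      have hρJ : amalRank M₁ M₂ J = J.encard := hJ.2 J Subset.rfl hJfin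
      have hltE : amalRank M₁ M₂ I < amalRank M₁ M₂ J := by
        rw [hρI, hρJ, ← hIfin.cast_ncard_eq, ← hJfin.cast_ncard_eq]
        exact_mod_cast hlt
      have hItop : amalRank M₁ M₂ I ≠ ⊤ := by
        rw [hρI]
        exact hIfin.encard_lt_top.ne
      have claim : ∃ e ∈ J, e ∉ I ∧ amalRank M₁ M₂ (insert e I) ≠ amalRank M₁ M₂ I := by
        by_contra hcl
        push_neg at hcl
        have hstep : ∀ e ∈ J \ I, amalRank M₁ M₂ (insert e I) = amalRank M₁ M₂ I :=
          fun e he => hcl e he.1 he.2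
        have hflat := AmalgamProof.flat_step hres hfin hmod hI.1 hItop hJfin.diff
          (diff_subset.trans hJ.1) hstep
        rw [union_diff_self] at hflat
        have hge : amalRank M₁ M₂ J ≤ amalRank M₁ M₂ I :=
          hflat ▸ AmalgamProof.amalRank_mono subset_union_right
        exact absurd (lt_of_lt_of_le hltE hge) (lt_irrefl _)
      obtain ⟨e, heJ, heI, hne⟩ := claim
      have heq : amalRank M₁ M₂ (insert e I) = amalRank M₁ M₂ I + 1 := by
        refine le_antisymm (AmalgamProof.amalRank_insert_le hres hfin hI.1 (hJ.1 heJ)) ?_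
        rw [ENat.add_one_le_iff hItop]
        exact lt_of_le_of_ne (AmalgamProof.amalRank_mono (subset_insert _ _)) (Ne.symm hne)
      have hfull : amalRank M₁ M₂ (insert e I) = (insert e I).encard := by
        rw [heq, hρI, encard_insert_of_notMem heI]
      exact ⟨e, heJ, heI, insert_subset (hJ.1 heJ) hI.1,
        fun K hK hKfin => AmalgamProof.full_rank_mono hres hfin
          (insert_subset (hJ.1 heJ) hI.1) (hIfin.insert e) hfull hK⟩
    have ind_compact : ∀ I, (∀ K, K ⊆ I → K.Finite → Ind K) → Ind I := by
      intro I h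
      refine ⟨fun x hx => (h {x} (singleton_subset_iff.2 hx) (finite_singleton x)).1
        (mem_singleton x), ?_⟩
      exact fun K hK hKfin => (h K hK hKfin).2 K Subset.rfl hKfin
    have ind_ground : ∀ I, Ind I → I ⊆ E := fun I hI => hI.1
    set MI := IndepMatroid.ofFinitaryCardAugment E Ind ind_empty ind_subset ind_aug ind_compact
      ind_ground with hMI
    have hind : ∀ I, MI.matroid.Indep I ↔ Ind I := by
      intro I
      rw [IndepMatroid.matroid_indep_iff, hMI, IndepMatroid.ofFinitaryCardAugment_indep]
    refine ⟨MI.matroid, rfl, fun X hX => ?_⟩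
    refine le_antisymm ?_ ?_
    · refine Matroid.erank'_le_iff.2 fun I hI hIX => ?_
      rw [hind] at hI
      by_contra hgt
      push_neg at hgt
      have htop : amalRank M₁ M₂ X ≠ ⊤ := hgt.ne_top
      obtain ⟨n, hn⟩ : ∃ n : ℕ, amalRank M₁ M₂ X = n :=
        ⟨(amalRank M₁ M₂ X).toNat, (ENat.coe_toNat htop).symm⟩
      have h1 : ((n + 1 : ℕ) : ℕ∞) ≤ I.encard := by
        push_cast
        rw [← hn]
        exact ENat.add_one_le_iff htop |>.2 hgt
      obtain ⟨K, hKI, hKcard⟩ := Set.exists_subset_encard_eq h1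
      have hKfin : K.Finite := finite_of_encard_eq_coe hKcard
      have hfull : amalRank M₁ M₂ K = K.encard := hI.2 K hKI hKfin
      have hmono : amalRank M₁ M₂ K ≤ amalRank M₁ M₂ X :=
        AmalgamProof.amalRank_mono (hKI.trans hIX)
      rw [hfull, hKcard, hn] at hmono
      exact absurd hmono (by exact_mod_cast Nat.not_succ_le_self n)
    · by_cases htop : amalRank M₁ M₂ X = ⊤
      · rw [htop]
        refine top_le_iff.2 ?_
        by_contra hne
        obtain ⟨m, hm⟩ : ∃ m : ℕ, MI.matroid.erank' X = m :=
          ⟨(MI.matroid.erank' X).toNat, (ENat.coe_toNat hne).symm⟩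
        obtain ⟨K, hKX, hKfin, hKcard, hKrank⟩ :=
          AmalgamProof.exists_full_subset hres hfin hmod hX (m + 1) (by
            rw [htop]; exact le_top)
        have hKind : MI.matroid.Indep K := (hind K).2 ⟨hKX.trans hX,
          fun L hL hLfin => AmalgamProof.full_rank_mono hres hfin (hKX.trans hX) hKfin
            (by rw [hKrank, hKcard]) hL⟩
        have hle := Matroid.le_erank'_of hKind hKX
        rw [hKcard, hm] at hle
        exact absurd hle (by exact_mod_cast Nat.not_succ_le_self m)
      · obtain ⟨n, hn⟩ : ∃ n : ℕ, amalRank M₁ M₂ X = n :=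
          ⟨(amalRank M₁ M₂ X).toNat, (ENat.coe_toNat htop).symm⟩
        obtain ⟨K, hKX, hKfin, hKcard, hKrank⟩ :=
          AmalgamProof.exists_full_subset hres hfin hmod hX n (le_of_eq hn.symm)
        have hKind : MI.matroid.Indep K := (hind K).2 ⟨hKX.trans hX,
          fun L hL hLfin => AmalgamProof.full_rank_mono hres hfin (hKX.trans hX) hKfin
            (by rw [hKrank, hKcard]) hL⟩
        have hle := Matroid.le_erank'_of hKind hKX
        rw [hn, ← hKcard]
        exact hle
end

section
/- For a gain graph (G, σ) over the multiplicative group of a field K, the column matroid of the matrix D(G, σ) equals the gain-graphic (frame) matroid M(G, σ): a set of columns is linearly independent over K if and only if the corresponding edge set contains no balanced cycle and each connected component of the induced subgraph contains at most one cycle. -/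
set_option linter.unusedSectionVars false
set_option linter.unnecessarySimpa false
set_option linter.unreachableTactic false
set_option linter.unusedTactic false


open Set

/-- A gain graph over the multiplicative group of a field `K`: an undirected graph
(possibly with loops and multiple edges), given by a reference orientation
`src e → tgt e` of each edge `e`, together with a nonzero gain `gain e ∈ K` for the
reference orientation (the reverse orientation has gain `(gain e)⁻¹`). -/
structure GainGraph (V E K : Type*) [Field K] where
  src : E → V
  tgt : E → V
  gain : E → K
  gain_ne_zero : ∀ e, gain e ≠ 0

namespace GainGraph

variable {V E K : Type*} [Field K]

/-- The initial vertex of an oriented edge (a step of a walk); `(e, true)` traverses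
`e` in the reference orientation, `(e, false)` in the reverse orientation. -/
def stepSrc (G : GainGraph V E K) (s : E × Bool) : V :=
  if s.2 then G.src s.1 else G.tgt s.1

/-- The final vertex of an oriented edge. -/
def stepTgt (G : GainGraph V E K) (s : E × Bool) : V :=
  if s.2 then G.tgt s.1 else G.src s.1

/-- The gain of an oriented edge. -/
def stepGain (G : GainGraph V E K) (s : E × Bool) : K :=
  if s.2 then G.gain s.1 else (G.gain s.1)⁻¹

/-- `w` is a cycle of the gain graph `G`: a nonempty closed walk with pairwise
distinct edges and pairwise distinct vertices. -/
structure IsCycle (G : GainGraph V E K) (w : List (E × Bool)) : Prop where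
  ne : w ≠ []
  chain : w.Chain' (fun s t => G.stepTgt s = G.stepSrc t)
  closed : G.stepTgt (w.getLast ne) = G.stepSrc (w.head ne)
  edges_nodup : (w.map Prod.fst).Nodup
  verts_nodup : (w.map G.stepSrc).Nodup

/-- The product of the gains along a walk. -/
def gainProd (G : GainGraph V E K) (w : List (E × Bool)) : K :=
  (w.map G.stepGain).prod

/-- The matrix `D(G, σ)`, given by its columns: the column of a balanced loop is
zero; the column of an unbalanced loop at `v` is the standard basis vector at `v`;
the column of a non-loop edge `e` has entry `1` in row `src e`, entry `-gain e` in
row `tgt e`, and zeros elsewhere. -/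
def Dmat [DecidableEq V] [DecidableEq K] (G : GainGraph V E K) (e : E) : V → K :=
  fun v =>
    if G.src e = G.tgt e then
      (if G.gain e = 1 then 0 else if v = G.src e then 1 else 0)
    else if v = G.src e then 1 else if v = G.tgt e then -G.gain e else 0

/-- Reachability between vertices using only edges from the set `X`. -/
def ReachIn (G : GainGraph V E K) (X : Set E) : V → V → Prop :=
  Relation.ReflTransGen
    (fun u v => ∃ e ∈ X, (G.src e = u ∧ G.tgt e = v) ∨ (G.src e = v ∧ G.tgt e = u))

-- ## auxiliary development
variable [DecidableEq V] [DecidableEq K] (G : GainGraph V E K)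

def unitVec [DecidableEq V] (x : V) : V → K := fun v => if v = x then 1 else 0

def col (s : E × Bool) : V → K :=
  fun v => unitVec (G.stepSrc s) v - G.stepGain s * unitVec (G.stepTgt s) v

def mu (s : E × Bool) : K :=
  if G.src s.1 = G.tgt s.1 then
    (if G.gain s.1 = 1 then 1 else 1 - G.stepGain s)
  else if s.2 then 1 else -G.stepGain s

lemma chain'_iff_get_old {α : Type*} {R : α → α → Prop} {l : List α} :
    List.Chain' R l ↔ ∀ (i : ℕ) (h : i < l.length - 1),
      R (l.get ⟨i, by omega⟩) (l.get ⟨i + 1, by omega⟩) := by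
  show List.IsChain R l ↔ _
  rw [List.isChain_iff_getElem]
  constructor
  · intro h i hi; exact h i (by omega)
  · intro h i hi; exact h i (by omega)

lemma chain'_append_old {α : Type*} {R : α → α → Prop} {l₁ l₂ : List α} :
    List.Chain' R (l₁ ++ l₂) ↔ List.Chain' R l₁ ∧ List.Chain' R l₂ ∧
      ∀ x ∈ l₁.getLast?, ∀ y ∈ l₂.head?, R x y :=
  List.isChain_append

lemma getLast_eq_get_old {α : Type*} (l : List α) (h : l ≠ []) :
    l.getLast h = l.get ⟨l.length - 1, Nat.sub_lt (List.length_pos_iff.mpr h) Nat.one_pos⟩ :=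
  List.getLast_eq_getElem h

lemma stepGain_ne_zero (s : E × Bool) : G.stepGain s ≠ 0 := by
  have := G.gain_ne_zero s.1
  unfold stepGain; split <;> simp [this]

lemma stepGain_ne_one (s : E × Bool) (h : G.gain s.1 ≠ 1) : G.stepGain s ≠ 1 := by
  unfold stepGain; split
  · exact h
  · simpa [inv_eq_one] using h

lemma mu_ne_zero (s : E × Bool) : G.mu s ≠ 0 := by
  unfold mu
  split_ifs with h1 h2
  · exact one_ne_zero
  · exact sub_ne_zero_of_ne (Ne.symm (G.stepGain_ne_one s h2))
  · exact one_ne_zero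
  · simpa using G.stepGain_ne_zero s

lemma col_eq (s : E × Bool) : G.col s = G.mu s • G.Dmat s.1 := by
  obtain ⟨e, b⟩ := s
  funext v
  have hg := G.gain_ne_zero e
  simp only [col, unitVec, mu, Dmat, stepSrc, stepTgt, stepGain, Pi.smul_apply, smul_eq_mul]
  by_cases hl : G.src e = G.tgt e
  · simp only [← hl]
    by_cases hb : G.gain e = 1
    · cases b <;> simp [hb, hg]
    · cases b <;> by_cases hv : v = G.src e <;> simp [hb, hv] <;> ring
  · have hl' : ¬ G.tgt e = G.src e := fun h => hl h.symm
    cases b <;> by_cases hv1 : v = G.src e <;> by_cases hv2 : v = G.tgt e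
    all_goals first
      | exact absurd (hv1.symm.trans hv2) hl
      | (simp [hl, hl', hv1, hv2]; try field_simp)
-- chunk 2
lemma gainProd_cons (s : E × Bool) (w : List (E × Bool)) :
    G.gainProd (s :: w) = G.stepGain s * G.gainProd w := by
  simp [gainProd]

lemma gainProd_ne_zero (w : List (E × Bool)) : G.gainProd w ≠ 0 := by
  induction w with
  | nil => simp [gainProd]
  | cons s t ih => rw [gainProd_cons]; exact mul_ne_zero (G.stepGain_ne_zero s) ih

def walkSum : List (E × Bool) → V → K
  | [] => 0
  | s :: t => G.col s + G.stepGain s • walkSum t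

lemma walkSum_eq (w : List (E × Bool)) (hne : w ≠ [])
    (hc : w.Chain' (fun s t => G.stepTgt s = G.stepSrc t)) :
    G.walkSum w = fun v =>
      unitVec (G.stepSrc (w.head hne)) v
        - G.gainProd w * unitVec (G.stepTgt (w.getLast hne)) v := by
  induction w with
  | nil => simp at hne
  | cons s t ih =>
    cases t with
    | nil =>
      funext v
      simp [walkSum, col, gainProd]
    | cons s' t' =>
      have hc' := (List.isChain_cons.mp hc).2
      have hlink : G.stepTgt s = G.stepSrc s' := by
        have := (List.isChain_cons.mp hc).1
        simpa using this
      have ht : (s' :: t') ≠ [] := by simp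
      have h2 := ih ht hc'
      funext v
      have h2v := congrFun h2 v
      rw [show walkSum G (s :: s' :: t') = G.col s + G.stepGain s • walkSum G (s' :: t')
        from rfl]
      simp only [Pi.add_apply, Pi.smul_apply, smul_eq_mul, h2v, col,
        List.head_cons, List.getLast_cons ht, G.gainProd_cons s]
      rw [hlink]
      ring

def pcoef (w : List (E × Bool)) (i : ℕ) : K := ((w.take i).map G.stepGain).prod

lemma pcoef_ne_zero (w : List (E × Bool)) (i : ℕ) : G.pcoef w i ≠ 0 := by
  unfold pcoef
  induction w generalizing i with
  | nil => simp
  | cons s t ih =>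
    cases i with
    | zero => simp
    | succ j =>
      simp only [List.take_succ_cons, List.map_cons, List.prod_cons]
      exact mul_ne_zero (G.stepGain_ne_zero s) (ih j)

lemma walkSum_eq_sum (w : List (E × Bool)) :
    G.walkSum w = ∑ i : Fin w.length, G.pcoef w i • G.col (w.get i) := by
  induction w with
  | nil => simp [walkSum]
  | cons s t ih =>
    rw [show walkSum G (s :: t) = G.col s + G.stepGain s • walkSum G t from rfl, ih]
    simp [Fin.sum_univ_succ, pcoef, List.take_succ_cons, Finset.smul_sum, smul_smul]

lemma walkSum_closed (w : List (E × Bool)) (hne : w ≠ [])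
    (hc : w.Chain' (fun s t => G.stepTgt s = G.stepSrc t))
    (hcl : G.stepTgt (w.getLast hne) = G.stepSrc (w.head hne)) :
    G.walkSum w = (1 - G.gainProd w) • (unitVec (G.stepSrc (w.head hne)) : V → K) := by
  rw [G.walkSum_eq w hne hc]
  funext v
  rw [hcl]
  simp only [Pi.smul_apply, smul_eq_mul]
  ring

lemma cycle_sum (w : List (E × Bool)) (hne : w ≠ [])
    (hc : w.Chain' (fun s t => G.stepTgt s = G.stepSrc t))
    (hcl : G.stepTgt (w.getLast hne) = G.stepSrc (w.head hne)) :
    ∑ i : Fin w.length, (G.pcoef w i * G.mu (w.get i)) • G.Dmat (w.get i).1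
      = (1 - G.gainProd w) • (unitVec (G.stepSrc (w.head hne)) : V → K) := by
  rw [← G.walkSum_closed w hne hc hcl, G.walkSum_eq_sum w]
  refine Finset.sum_congr rfl fun i _ => ?_
  rw [G.col_eq, smul_smul]

lemma nodup_map_get_inj {α β : Type*} {w : List α} {f : α → β} (h : (w.map f).Nodup)
    (i j : Fin w.length) (hij : f (w.get i) = f (w.get j)) : i = j := by
  have hi : ((w.map f).get ⟨i, by simp⟩) = f (w.get i) := by simp
  have hj : ((w.map f).get ⟨j, by simp⟩) = f (w.get j) := by simp
  have h3 := (List.Nodup.get_inj_iff h).mp (hi.trans (hij.trans hj.symm))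
  exact Fin.ext (by simpa using congrArg Fin.val h3)

lemma Dmat_support {e : E} {v : V} (h : G.Dmat e v ≠ 0) : v = G.src e ∨ v = G.tgt e := by
  by_contra hcon
  push_neg at hcon
  apply h
  simp [Dmat, hcon.1, hcon.2]

lemma Dmat_src_ne_zero {e : E} (h : ¬(G.src e = G.tgt e ∧ G.gain e = 1)) :
    G.Dmat e (G.src e) ≠ 0 := by
  by_cases hl : G.src e = G.tgt e
  · have hb : G.gain e ≠ 1 := fun hb => h ⟨hl, hb⟩
    simp [Dmat, hl, hb]
  · simp [Dmat, hl]

lemma Dmat_tgt_ne_zero {e : E} (hl : G.src e ≠ G.tgt e) : G.Dmat e (G.tgt e) ≠ 0 := by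
  have h2 : ¬ G.tgt e = G.src e := fun h => hl h.symm
  simp [Dmat, hl, h2, G.gain_ne_zero e]

lemma Dmat_balanced_loop {e : E} (h1 : G.src e = G.tgt e) (h2 : G.gain e = 1) :
    G.Dmat e = 0 := by
  funext v; simp [Dmat, h1, h2]
-- chunk 3 : rotations
lemma isCycle_rotate_one (s : E × Bool) (t : List (E × Bool)) (h : G.IsCycle (s :: t)) :
    G.IsCycle (t ++ [s]) := by
  have hR := h.chain
  refine ⟨by simp, ?_, ?_, ?_, ?_⟩
  · rw [chain'_append_old]
    refine ⟨(List.isChain_cons.mp hR).2, List.isChain_singleton s, ?_⟩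
    intro x hx y hy
    simp only [List.head?_cons, Option.mem_def, Option.some.injEq] at hy
    subst hy
    cases t with
    | nil => simp at hx
    | cons a t' =>
      rw [List.getLast?_eq_getLast (l := a :: t') (by simp)] at hx
      have hx' : (a :: t').getLast (by simp) = x := by simpa using hx
      rw [← hx']
      have hlast : (s :: a :: t').getLast (by simp) = (a :: t').getLast (by simp) :=
        List.getLast_cons (by simp)
      have := h.closed
      rw [hlast] at this
      simpa using this
  · rw [List.getLast_concat]
    cases t with
    | nil =>
      have := h.closed
      simpa using this
    | cons a t' =>
      have hhead : (a :: t' ++ [s]).head (by simp) = a := rfl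
      rw [hhead]
      have := (List.isChain_cons.mp hR).1
      simpa using this a rfl
  · have := h.edges_nodup
    rw [List.map_append]
    rw [List.nodup_append_comm]
    simpa using this
  · have := h.verts_nodup
    rw [List.map_append]
    rw [List.nodup_append_comm]
    simpa using this

lemma isCycle_rotate {w : List (E × Bool)} (h : G.IsCycle w) (n : ℕ) :
    G.IsCycle (w.rotate n) := by
  induction n generalizing w with
  | zero => simpa [List.rotate_zero]
  | succ n ih =>
    cases w with
    | nil => exact absurd rfl h.ne
    | cons s t =>
      rw [List.rotate_cons_succ]
      exact ih (G.isCycle_rotate_one s t h)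

lemma gainProd_rotate (w : List (E × Bool)) (n : ℕ) :
    G.gainProd (w.rotate n) = G.gainProd w := by
  unfold gainProd
  rw [List.map_rotate]
  exact ((List.map G.stepGain w).rotate_perm n).prod_eq

lemma head_rotate {w : List (E × Bool)} {n : ℕ} (hn : n < w.length) (hne : w.rotate n ≠ []) :
    (w.rotate n).head hne = w.get ⟨n, hn⟩ := by
  have h0 : 0 < (w.rotate n).length := List.length_pos_iff.mpr hne
  rw [← List.get_mk_zero h0, List.get_rotate]
  congr 1
  ext
  simp [Nat.mod_eq_of_lt hn]

lemma isCycle_stepTgt_mem {w : List (E × Bool)} (h : G.IsCycle w) {s : E × Bool}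
    (hs : s ∈ w) : G.stepTgt s ∈ w.map G.stepSrc := by
  obtain ⟨i, hi⟩ := List.mem_iff_get.mp hs
  by_cases hlt : (i : ℕ) + 1 < w.length
  · have := chain'_iff_get_old.mp h.chain i (by omega)
    rw [hi] at this
    rw [this]
    exact List.mem_map_of_mem (f := G.stepSrc) (List.get_mem w _)
  · have hlen : (i : ℕ) = w.length - 1 := by have := i.2; omega
    have hlast : w.getLast h.ne = s := by
      rw [getLast_eq_get_old]
      rw [← hi]
      congr 1
      exact Fin.ext (by simp [hlen])
    rw [← hlast, h.closed]
    have : w.head h.ne ∈ w := List.head_mem h.ne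
    exact List.mem_map_of_mem (f := G.stepSrc) this

lemma step_endpoints (s : E × Bool) :
    (G.src s.1 = G.stepSrc s ∧ G.tgt s.1 = G.stepTgt s) ∨
    (G.src s.1 = G.stepTgt s ∧ G.tgt s.1 = G.stepSrc s) := by
  cases hb : s.2 <;> simp [stepSrc, stepTgt, hb]

lemma isCycle_endpoints {w : List (E × Bool)} (h : G.IsCycle w) {s : E × Bool}
    (hs : s ∈ w) : G.src s.1 ∈ w.map G.stepSrc ∧ G.tgt s.1 ∈ w.map G.stepSrc := by
  have h1 : G.stepSrc s ∈ w.map G.stepSrc := List.mem_map_of_mem (f := G.stepSrc) hs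
  have h2 := G.isCycle_stepTgt_mem h hs
  rcases G.step_endpoints s with ⟨ha, hb⟩ | ⟨ha, hb⟩ <;> rw [ha, hb] <;> exact ⟨‹_›, ‹_›⟩
-- chunk 4 : reachability

lemma rel_symm {X : Set E} {a b : V}
    (h : ∃ e ∈ X, (G.src e = a ∧ G.tgt e = b) ∨ (G.src e = b ∧ G.tgt e = a)) :
    ∃ e ∈ X, (G.src e = b ∧ G.tgt e = a) ∨ (G.src e = a ∧ G.tgt e = b) := by
  obtain ⟨e, he, h1 | h2⟩ := h
  exacts [⟨e, he, Or.inr h1⟩, ⟨e, he, Or.inl h2⟩]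

lemma reachIn_refl {X : Set E} (u : V) : G.ReachIn X u u := Relation.ReflTransGen.refl

lemma reachIn_trans {X : Set E} {a b c : V} (h1 : G.ReachIn X a b) (h2 : G.ReachIn X b c) :
    G.ReachIn X a c := Relation.ReflTransGen.trans h1 h2

lemma reachIn_symm {X : Set E} {a b : V} (h : G.ReachIn X a b) : G.ReachIn X b a := by
  induction h with
  | refl => exact Relation.ReflTransGen.refl
  | tail _ step ih => exact Relation.ReflTransGen.head (G.rel_symm step) ih

lemma reachIn_mono {X Y : Set E} (hXY : X ⊆ Y) {a b : V} (h : G.ReachIn X a b) :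
    G.ReachIn Y a b := by
  induction h with
  | refl => exact Relation.ReflTransGen.refl
  | tail _ step ih =>
    obtain ⟨e, he, hor⟩ := step
    exact Relation.ReflTransGen.tail ih ⟨e, hXY he, hor⟩

lemma reachIn_step {X : Set E} (s : E × Bool) (hX : s.1 ∈ X) :
    G.ReachIn X (G.stepSrc s) (G.stepTgt s) := by
  refine Relation.ReflTransGen.single ⟨s.1, hX, ?_⟩
  rcases G.step_endpoints s with ⟨h1, h2⟩ | ⟨h1, h2⟩
  · exact Or.inl ⟨h1, h2⟩
  · exact Or.inr ⟨h1, h2⟩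

lemma reachIn_edge {X : Set E} (e : E) (he : e ∈ X) : G.ReachIn X (G.src e) (G.tgt e) :=
  Relation.ReflTransGen.single ⟨e, he, Or.inl ⟨rfl, rfl⟩⟩

/-- all vertices of a walk are reachable from the source of its head -/
lemma reach_of_chain {X : Set E} (w : List (E × Bool)) (hne : w ≠ [])
    (hc : w.Chain' (fun s t => G.stepTgt s = G.stepSrc t)) (hX : ∀ s ∈ w, s.1 ∈ X)
    {s : E × Bool} (hs : s ∈ w) :
    G.ReachIn X (G.stepSrc (w.head hne)) (G.stepSrc s) ∧
      G.ReachIn X (G.stepSrc (w.head hne)) (G.stepTgt s) := by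
  induction w with
  | nil => simp at hs
  | cons s0 t ih =>
    rcases List.mem_cons.mp hs with rfl | hs
    · simp only [List.head_cons]
      exact ⟨G.reachIn_refl _, G.reachIn_step s (hX s (by simp))⟩
    · have ht : t ≠ [] := List.ne_nil_of_mem hs
      have hc' := (List.isChain_cons.mp hc).2
      have hlink : G.stepTgt s0 = G.stepSrc (t.head ht) := by
        have := (List.isChain_cons.mp hc).1
        have hh : t.head? = some (t.head ht) := List.head?_eq_head ht
        exact this _ hh
      have ihh := ih ht hc' (fun a ha => hX a (List.mem_cons_of_mem s0 ha)) hs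
      have hstep : G.ReachIn X (G.stepSrc ((s0 :: t).head (by simp))) (G.stepSrc (t.head ht)) := by
        rw [List.head_cons, ← hlink]
        exact G.reachIn_step s0 (hX s0 (by simp))
      exact ⟨G.reachIn_trans hstep ihh.1, G.reachIn_trans hstep ihh.2⟩

/-- detour around a cycle: endpoints of an edge of a cycle are joined by the rest -/
lemma cycle_detour {w : List (E × Bool)} (h : G.IsCycle w) {s : E × Bool} (hs : s ∈ w) :
    G.ReachIn ({f | f ∈ w.map Prod.fst} \ {s.1}) (G.stepTgt s) (G.stepSrc s) := by
  obtain ⟨i, hi⟩ := List.mem_iff_get.mp hs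
  have hCr := G.isCycle_rotate h (i : ℕ)
  have hrne : w.rotate (i : ℕ) ≠ [] := hCr.ne
  have hhead : (w.rotate (i : ℕ)).head hrne = s := by rw [head_rotate i.2 hrne]; exact hi
  obtain ⟨rest, hrest⟩ : ∃ rest, w.rotate (i : ℕ) = s :: rest :=
    ⟨(w.rotate (i : ℕ)).tail, by rw [← hhead]; exact (List.cons_head_tail hrne).symm⟩
  have hC2 : G.IsCycle (s :: rest) := hrest ▸ hCr
  have hperm : List.Perm ((s :: rest).map Prod.fst) (w.map Prod.fst) := by
    rw [← hrest]; exact (List.rotate_perm w (i : ℕ)).map Prod.fst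
  have hedges : ∀ a ∈ rest, a.1 ∈ {f | f ∈ w.map Prod.fst} \ {s.1} := by
    intro a ha
    have hmem : a.1 ∈ (s :: rest).map Prod.fst :=
      List.mem_map_of_mem (f := Prod.fst) (List.mem_cons_of_mem s ha)
    have hnd := hC2.edges_nodup
    have hs1 : s.1 ∉ rest.map Prod.fst := by simpa using (List.nodup_cons.mp hnd).1
    have hne' : a.1 ≠ s.1 := fun hcon => hs1 (hcon ▸ List.mem_map_of_mem (f := Prod.fst) ha)
    exact ⟨hperm.mem_iff.mp hmem, hne'⟩
  cases rest with
  | nil =>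
    have hcl := hC2.closed
    simp only [List.getLast_singleton, List.head_cons] at hcl
    rw [hcl]
    exact G.reachIn_refl _
  | cons r0 rs =>
    have hcr := hC2.chain
    have hlink : G.stepTgt s = G.stepSrc r0 := by
      have := (List.isChain_cons.mp hcr).1; simpa using this
    have hchain' := (List.isChain_cons.mp hcr).2
    have hlast : G.stepTgt ((r0 :: rs).getLast (by simp)) = G.stepSrc s := by
      have hcl := hC2.closed
      rw [List.getLast_cons (by simp : (r0 :: rs) ≠ [])] at hcl
      simpa using hcl
    have hr := G.reach_of_chain (X := {f | f ∈ w.map Prod.fst} \ {s.1}) (r0 :: rs) (by simp)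
      hchain' hedges (s := (r0 :: rs).getLast (by simp)) (List.getLast_mem _)
    rw [List.head_cons] at hr
    rw [hlink, ← hlast]
    exact hr.2

/-- extraction of a finite witness set for reachability -/
lemma reach_extract {X : Set E} {u v : V} (h : G.ReachIn X u v) :
    ∃ T : Finset E, ↑T ⊆ X ∧ G.ReachIn ↑T u v ∧
      ∀ e ∈ T, G.ReachIn (↑T : Set E) u (G.src e) ∧ G.ReachIn (↑T : Set E) u (G.tgt e) := by
  classical
  induction h with
  | refl => exact ⟨∅, by simp, G.reachIn_refl u, by simp⟩
  | @tail b c _ step ih =>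
    obtain ⟨T, hTX, hreach, hend⟩ := ih
    obtain ⟨f, hfX, hor⟩ := step
    refine ⟨insert f T, ?_, ?_, ?_⟩
    · intro x hx
      rcases Finset.mem_insert.mp hx with rfl | hx
      exacts [hfX, hTX hx]
    · have hsub : (↑T : Set E) ⊆ ↑(insert f T) := by
        intro x hx; exact Finset.mem_insert_of_mem hx
      refine Relation.ReflTransGen.tail (G.reachIn_mono hsub hreach) ⟨f, by simp, hor⟩
    · intro e he
      have hsub : (↑T : Set E) ⊆ ↑(insert f T) := by
        intro x hx; exact Finset.mem_insert_of_mem hx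
      have hub : G.ReachIn ↑(insert f T) u b := G.reachIn_mono hsub hreach
      rcases Finset.mem_insert.mp he with rfl | he
      · rcases hor with ⟨h1, h2⟩ | ⟨h1, h2⟩
        · subst h1; subst h2
          exact ⟨hub, Relation.ReflTransGen.tail hub ⟨e, by simp, Or.inl ⟨rfl, rfl⟩⟩⟩
        · subst h1; subst h2
          exact ⟨Relation.ReflTransGen.tail hub ⟨e, by simp, Or.inr ⟨rfl, rfl⟩⟩, hub⟩
      · exact ⟨G.reachIn_mono hsub (hend e he).1, G.reachIn_mono hsub (hend e he).2⟩

/-- replacing reachability through an edge with a detour -/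
lemma reach_erase {T : Set E} {e : E} (hdet : G.ReachIn (T \ {e}) (G.src e) (G.tgt e))
    {a b : V} (h : G.ReachIn T a b) : G.ReachIn (T \ {e}) a b := by
  induction h with
  | refl => exact G.reachIn_refl _
  | @tail x y _ step ih =>
    obtain ⟨f, hf, hor⟩ := step
    by_cases hfe : f = e
    · subst hfe
      rcases hor with ⟨h1, h2⟩ | ⟨h1, h2⟩
      · exact G.reachIn_trans ih (h1 ▸ h2 ▸ hdet)
      · exact G.reachIn_trans ih (h2 ▸ h1 ▸ G.reachIn_symm hdet)
    · exact Relation.ReflTransGen.tail ih ⟨f, ⟨hf, hfe⟩, hor⟩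
-- chunk 5 : counting bound for reachable sets

lemma reach_bound (n : ℕ) : ∀ (T : Finset E) (u : V), T.card ≤ n →
    {v | G.ReachIn ↑T u v}.Finite ∧
    {v | G.ReachIn ↑T u v}.ncard ≤
      {e : E | e ∈ T ∧ G.ReachIn ↑T u (G.src e) ∧ G.ReachIn ↑T u (G.tgt e)}.ncard + 1 := by
  classical
  induction n with
  | zero =>
    intro T u hcard
    have hT : T = ∅ := Finset.card_eq_zero.mp (Nat.le_zero.mp hcard)
    subst hT
    have hR : {v | G.ReachIn (↑(∅ : Finset E)) u v} = {u} := by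
      ext v
      simp only [Set.mem_setOf_eq, Set.mem_singleton_iff]
      constructor
      · intro hv
        rcases Relation.ReflTransGen.cases_head hv with h | ⟨c, ⟨e, he, _⟩, _⟩
        · exact h.symm
        · simp at he
      · rintro rfl; exact G.reachIn_refl _
    rw [hR]
    exact ⟨Set.finite_singleton u, by simp⟩
  | succ n ih =>
    intro T u hcard
    by_cases hR1 : ∀ v, G.ReachIn ↑T u v → v = u
    · have hR : {v | G.ReachIn ↑T u v} = {u} := by
        ext v
        simp only [Set.mem_setOf_eq, Set.mem_singleton_iff]
        exact ⟨hR1 v, by rintro rfl; exact G.reachIn_refl _⟩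
      rw [hR]
      exact ⟨Set.finite_singleton u, by simp⟩
    · push_neg at hR1
      obtain ⟨v0, hv0, hv0ne⟩ := hR1
      have hstep := (Relation.ReflTransGen.cases_head hv0).resolve_left
        (fun h => hv0ne h.symm)
      obtain ⟨c, step, _⟩ := hstep
      obtain ⟨e, heT, hor⟩ := step
      have heT' : e ∈ T := heT
      set T' := T.erase e with hT'def
      have hT'sub : (↑T' : Set E) ⊆ ↑T := by
        intro x hx
        simp only [hT'def, Finset.coe_erase, Set.mem_diff] at hx
        exact hx.1
      have hcard' : T'.card ≤ n := by
        have h1 : T'.card = T.card - 1 := Finset.card_erase_of_mem heT'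
        have h2 : 1 ≤ T.card := Finset.card_pos.mpr ⟨e, heT'⟩
        omega
      obtain ⟨hfin_u, hle_u⟩ := ih T' u hcard'
      obtain ⟨hfin_c, hle_c⟩ := ih T' c hcard'
      set Ru := {v | G.ReachIn ↑T' u v} with hRu
      set Rc := {v | G.ReachIn ↑T' c v} with hRc
      have key : ∀ v, G.ReachIn ↑T u v → v ∈ Ru ∪ Rc := by
        intro v hv
        induction hv with
        | refl => exact Or.inl (G.reachIn_refl u)
        | @tail b c' _ step' ih' =>
          obtain ⟨f, hfT, horf⟩ := step'
          by_cases hfe : f = e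
          · subst hfe
            have hc' : c' = G.src f ∨ c' = G.tgt f := by
              rcases horf with ⟨h1, h2⟩ | ⟨h1, h2⟩
              · exact Or.inr h2.symm
              · exact Or.inl h1.symm
            have hepts : (G.src f = u ∧ G.tgt f = c) ∨ (G.src f = c ∧ G.tgt f = u) := hor
            rcases hc' with rfl | rfl
            · rcases hepts with ⟨h1, _⟩ | ⟨h1, _⟩
              · rw [h1]; exact Or.inl (G.reachIn_refl u)
              · rw [h1]; exact Or.inr (G.reachIn_refl c)
            · rcases hepts with ⟨_, h2⟩ | ⟨_, h2⟩
              · rw [h2]; exact Or.inr (G.reachIn_refl c)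
              · rw [h2]; exact Or.inl (G.reachIn_refl u)
          · have hfT'' : f ∈ T' := Finset.mem_erase.mpr ⟨hfe, hfT⟩
            rcases ih' with hb | hb
            · exact Or.inl (Relation.ReflTransGen.tail hb ⟨f, hfT'', horf⟩)
            · exact Or.inr (Relation.ReflTransGen.tail hb ⟨f, hfT'', horf⟩)
      have hsubR : {v | G.ReachIn ↑T u v} ⊆ Ru ∪ Rc := key
      have hfinR : {v | G.ReachIn ↑T u v}.Finite := (hfin_u.union hfin_c).subset hsubR
      refine ⟨hfinR, ?_⟩
      have hfull_fin : {e' : E | e' ∈ T ∧ G.ReachIn ↑T u (G.src e') ∧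
          G.ReachIn ↑T u (G.tgt e')}.Finite :=
        T.finite_toSet.subset (fun x hx => hx.1)
      have hRuR : Ru ⊆ {v | G.ReachIn ↑T u v} := fun x hx => G.reachIn_mono hT'sub hx
      have huc : G.ReachIn ↑T u c := Relation.ReflTransGen.single ⟨e, heT, hor⟩
      have hRcR : Rc ⊆ {v | G.ReachIn ↑T u v} := fun x hx =>
        G.reachIn_trans huc (G.reachIn_mono hT'sub hx)
      by_cases hmem : c ∈ Ru
      · -- one class
        have hRceq : Rc ⊆ Ru := fun x hx => G.reachIn_trans hmem hx
        have hsub2 : {v | G.ReachIn ↑T u v} ⊆ Ru := fun v hv =>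
          (key v hv).elim id (fun h => hRceq h)
        have h1 : {v | G.ReachIn ↑T u v}.ncard ≤ Ru.ncard :=
          Set.ncard_le_ncard hsub2 hfin_u
        have hsubS : {e' : E | e' ∈ T' ∧ G.ReachIn ↑T' u (G.src e') ∧
            G.ReachIn ↑T' u (G.tgt e')} ⊆
            {e' : E | e' ∈ T ∧ G.ReachIn ↑T u (G.src e') ∧ G.ReachIn ↑T u (G.tgt e')} := by
          intro x hx
          exact ⟨hT'sub hx.1, G.reachIn_mono hT'sub hx.2.1, G.reachIn_mono hT'sub hx.2.2⟩
        have h2 := Set.ncard_le_ncard hsubS hfull_fin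
        omega
      · -- two classes
        have hdisj : Disjoint Ru Rc := by
          rw [Set.disjoint_left]
          intro x hxu hxc
          exact hmem (G.reachIn_trans hxu (G.reachIn_symm hxc))
        have h1 : {v | G.ReachIn ↑T u v}.ncard ≤ Ru.ncard + Rc.ncard := by
          have := Set.ncard_le_ncard hsubR (hfin_u.union hfin_c)
          have h2 := Set.ncard_union_le Ru Rc
          omega
        set Su := {e' : E | e' ∈ T' ∧ G.ReachIn ↑T' u (G.src e') ∧
          G.ReachIn ↑T' u (G.tgt e')} with hSu
        set Sc := {e' : E | e' ∈ T' ∧ G.ReachIn ↑T' c (G.src e') ∧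
          G.ReachIn ↑T' c (G.tgt e')} with hSc
        set Sfull := {e' : E | e' ∈ T ∧ G.ReachIn ↑T u (G.src e') ∧
          G.ReachIn ↑T u (G.tgt e')} with hSfull
        have hSu_fin : Su.Finite := T.finite_toSet.subset (fun x hx => hT'sub hx.1)
        have hSc_fin : Sc.Finite := T.finite_toSet.subset (fun x hx => hT'sub hx.1)
        have hSdisj : Disjoint Su Sc := by
          rw [Set.disjoint_left]
          intro x hxu hxc
          exact (Set.disjoint_left.mp hdisj hxu.2.1 hxc.2.1)
        have heSu : e ∉ Su := fun hx => (Finset.mem_erase.mp hx.1).1 rfl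
        have heSc : e ∉ Sc := fun hx => (Finset.mem_erase.mp hx.1).1 rfl
        have hsub_all : Su ∪ Sc ∪ {e} ⊆ Sfull := by
          intro x hx
          rcases hx with (hx | hx) | hx
          · exact ⟨hT'sub hx.1, G.reachIn_mono hT'sub hx.2.1, G.reachIn_mono hT'sub hx.2.2⟩
          · exact ⟨hT'sub hx.1, G.reachIn_trans huc (G.reachIn_mono hT'sub hx.2.1),
              G.reachIn_trans huc (G.reachIn_mono hT'sub hx.2.2)⟩
          · rcases hx with rfl
            rcases hor with ⟨h1, h2⟩ | ⟨h1, h2⟩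
            · exact ⟨heT', by rw [h1]; exact G.reachIn_refl _, by rw [h2]; exact huc⟩
            · exact ⟨heT', by rw [h1]; exact huc, by rw [h2]; exact G.reachIn_refl _⟩
        have hcard_all : (Su ∪ Sc ∪ {e}).ncard = Su.ncard + Sc.ncard + 1 := by
          rw [Set.ncard_union_eq (by
              rw [Set.disjoint_left]
              intro x hxu hxe
              rcases hxe with rfl
              rcases hxu with hxu | hxu
              exacts [heSu hxu, heSc hxu])
            ((hSu_fin.union hSc_fin)) (Set.finite_singleton e)]
          rw [Set.ncard_union_eq hSdisj hSu_fin hSc_fin]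
          simp
        have hS_le : Su.ncard + Sc.ncard + 1 ≤ Sfull.ncard := by
          rw [← hcard_all]
          exact Set.ncard_le_ncard hsub_all hfull_fin
        omega
-- chunk 6 : linear algebra

lemma list_sum_map_get {α M : Type*} [AddCommMonoid M] (l : List α) (f : α → M) :
    (l.map f).sum = ∑ i : Fin l.length, f (l.get i) := by
  induction l with
  | nil => simp
  | cons a t ih =>
    simp only [List.map_cons, List.sum_cons, ih, List.length_cons, Fin.sum_univ_succ]
    rfl

lemma li_iff_finsets {X : Set E} :
    LinearIndependent K (fun e : X => G.Dmat e.val) ↔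
      ∀ F : Finset E, ↑F ⊆ X → ∀ g : E → K,
        ∑ e ∈ F, g e • G.Dmat e = 0 → ∀ e ∈ F, g e = 0 := by
  classical
  rw [linearIndependent_iff']
  constructor
  · intro h F hFX g hsum e heF
    set emb : {x // x ∈ F} ↪ ↥X :=
      ⟨fun x => ⟨x.1, hFX x.2⟩, by intro a b hab; have h2 := congrArg Subtype.val hab; exact Subtype.ext h2⟩
    set s : Finset ↥X := F.attach.map emb with hs
    have hsum' : ∑ i ∈ s, g i.1 • G.Dmat i.1 = 0 := by
      rw [hs, Finset.sum_map]
      simp only [emb, Function.Embedding.coeFn_mk]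
      refine (Finset.sum_attach F (fun x => g x • G.Dmat x)).trans ?_
      exact hsum
    have hmem : (⟨e, hFX heF⟩ : ↥X) ∈ s := by
      rw [hs, Finset.mem_map]
      exact ⟨⟨e, heF⟩, Finset.mem_attach _ _, rfl⟩
    exact h s (fun i => g i.1) hsum' ⟨e, hFX heF⟩ hmem
  · intro h s g hsum i his
    set F : Finset E := s.image Subtype.val with hF
    have hFX : ↑F ⊆ X := by
      intro x hx
      rw [hF] at hx
      simp only [Finset.coe_image, Set.mem_image, Finset.mem_coe] at hx
      obtain ⟨y, _, rfl⟩ := hx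
      exact y.2
    set g' : E → K := fun e => if he : e ∈ X then (if ⟨e, he⟩ ∈ s then g ⟨e, he⟩ else 0) else 0
      with hg'
    have hsum' : ∑ e ∈ F, g' e • G.Dmat e = 0 := by
      rw [hF, Finset.sum_image (by intro x _ y _ hxy; exact Subtype.ext hxy)]
      rw [← hsum]
      refine Finset.sum_congr rfl fun x hx => ?_
      have : g' x.1 = g x := by
        simp only [hg', dif_pos x.2, Subtype.coe_eta, if_pos hx]
      rw [this]
    have hiF : i.1 ∈ F := by
      rw [hF, Finset.mem_image]
      exact ⟨i, his, rfl⟩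
    have := h F hFX g' hsum' i.1 hiF
    simpa only [hg', dif_pos i.2, Subtype.coe_eta, if_pos his] using this

lemma card_le_of_indep (F : Finset E) (W : Finset V)
    (hsupp : ∀ e ∈ F, ∀ v : V, G.Dmat e v ≠ 0 → v ∈ W)
    (hLI : ∀ g : E → K, ∑ e ∈ F, g e • G.Dmat e = 0 → ∀ e ∈ F, g e = 0) :
    F.card ≤ W.card := by
  classical
  set b : ↥F → (↥W → K) := fun e w => G.Dmat e.1 w.1 with hb
  have hbLI : LinearIndependent K b := by
    rw [Fintype.linearIndependent_iff]
    intro g hsum i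
    set g' : E → K := fun e => if he : e ∈ F then g ⟨e, he⟩ else 0 with hg'
    have hzero : ∑ e ∈ F, g' e • G.Dmat e = 0 := by
      funext v
      simp only [Finset.sum_apply, Pi.zero_apply, Pi.smul_apply, smul_eq_mul]
      by_cases hvW : v ∈ W
      · have h0 := congrFun hsum ⟨v, hvW⟩
        simp only [Finset.sum_apply, Pi.zero_apply, Pi.smul_apply, smul_eq_mul] at h0
        rw [← Finset.sum_attach F (fun e => g' e * G.Dmat e v), ← h0]
        refine Finset.sum_congr rfl fun x _ => ?_
        simp only [hg', dif_pos x.2, hb]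
      · refine Finset.sum_eq_zero fun e he => ?_
        have : G.Dmat e v = 0 := by
          by_contra hcon
          exact hvW (hsupp e he v hcon)
        simp [this]
    have := hLI g' hzero i.1 i.2
    simpa only [hg', dif_pos i.2, Subtype.coe_eta] using this
  have hcard := hbLI.fintype_card_le_finrank
  rwa [Module.finrank_pi, Fintype.card_coe, Fintype.card_coe] at hcard

lemma unit_indep {w : List (E × Bool)} (h : G.IsCycle w) :
    LinearIndependent K (fun i : Fin w.length => (unitVec (G.stepSrc (w.get i)) : V → K)) := by
  rw [Fintype.linearIndependent_iff]
  intro g hsum i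
  have hv := congrFun hsum (G.stepSrc (w.get i))
  rw [Finset.sum_apply] at hv
  rw [Pi.zero_apply] at hv
  rw [Finset.sum_eq_single i] at hv
  · simpa [unitVec] using hv
  · intro j _ hji
    have hne : G.stepSrc (w.get i) ≠ G.stepSrc (w.get j) := by
      intro hcon
      exact hji (nodup_map_get_inj h.verts_nodup j i hcon.symm)
    rw [List.get_eq_getElem, List.get_eq_getElem] at hne
    simp [unitVec, hne]
  · intro hi; exact absurd (Finset.mem_univ i) hi

lemma unbalanced_cycle_indep {w : List (E × Bool)} (h : G.IsCycle w)
    (hg : G.gainProd w ≠ 1) :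
    LinearIndependent K (fun i : Fin w.length => G.Dmat (w.get i).1) := by
  classical
  set cols : Fin w.length → (V → K) := fun i => G.Dmat (w.get i).1 with hcols
  have hspan : ∀ i : Fin w.length, (unitVec (G.stepSrc (w.get i)) : V → K)
      ∈ Submodule.span K (Set.range cols) := by
    intro i
    have hCr := G.isCycle_rotate h (i : ℕ)
    have hrne := hCr.ne
    have hhead := head_rotate i.2 hrne
    have hgr : G.gainProd (w.rotate (i : ℕ)) = G.gainProd w := G.gainProd_rotate w i
    have hsum := G.cycle_sum (w.rotate (i : ℕ)) hrne hCr.chain hCr.closed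
    rw [hhead, hgr] at hsum
    have hne1 : (1 : K) - G.gainProd w ≠ 0 := sub_ne_zero_of_ne (Ne.symm hg)
    have hexp : (unitVec (G.stepSrc (w.get i)) : V → K)
        = (1 - G.gainProd w)⁻¹ • ∑ j : Fin (w.rotate (i : ℕ)).length,
            (G.pcoef (w.rotate (i : ℕ)) j * G.mu ((w.rotate (i : ℕ)).get j)) •
              G.Dmat ((w.rotate (i : ℕ)).get j).1 := by
      rw [hsum, smul_smul, inv_mul_cancel₀ hne1, one_smul]
    rw [hexp]
    refine Submodule.smul_mem _ _ (Submodule.sum_mem _ fun j _ => Submodule.smul_mem _ _ ?_)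
    have hmemw : (w.rotate (i : ℕ)).get j ∈ w :=
      ((List.rotate_perm w (i : ℕ)).mem_iff).mp (List.get_mem _ _)
    obtain ⟨k, hk⟩ := List.mem_iff_get.mp hmemw
    apply Submodule.subset_span
    exact ⟨k, by rw [hcols]; simp only []; rw [hk]⟩
  have hfin : FiniteDimensional K (Submodule.span K (Set.range cols)) :=
    FiniteDimensional.span_of_finite K (Set.finite_range cols)
  have hle1 : Set.finrank K (Set.range cols) ≤ w.length := by
    have := finrank_range_le_card (R := K) cols
    simpa using this
  have hunits := G.unit_indep h
  have hfam : LinearIndependent K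
      (fun i : Fin w.length => (⟨unitVec (G.stepSrc (w.get i)), hspan i⟩ :
        Submodule.span K (Set.range cols))) := by
    apply LinearIndependent.of_comp (Submodule.span K (Set.range cols)).subtype
    exact hunits
  have hle2 : w.length ≤ Module.finrank K (Submodule.span K (Set.range cols)) := by
    have := hfam.fintype_card_le_finrank
    simpa using this
  rw [linearIndependent_iff_card_eq_finrank_span]
  have : Set.finrank K (Set.range cols) = w.length := le_antisymm hle1 hle2
  simp [this]

lemma cycle_coeffs_zero [DecidableEq E] {w : List (E × Bool)} (h : G.IsCycle w)
    (hg : G.gainProd w ≠ 1) (g : E → K)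
    (hsum : ∑ e ∈ (w.map Prod.fst).toFinset, g e • G.Dmat e = 0) :
    ∀ e ∈ w.map Prod.fst, g e = 0 := by
  classical
  have hconv : ∑ e ∈ (w.map Prod.fst).toFinset, g e • G.Dmat e
      = ∑ i : Fin w.length, g ((w.get i).1) • G.Dmat ((w.get i).1) := by
    rw [List.sum_toFinset _ h.edges_nodup, List.map_map, list_sum_map_get]
    simp
  rw [hconv] at hsum
  have := Fintype.linearIndependent_iff.mp (G.unbalanced_cycle_indep h hg)
    (fun i => g ((w.get i).1)) hsum
  intro e he
  obtain ⟨s, hs, rfl⟩ := List.mem_map.mp he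
  obtain ⟨i, hi⟩ := List.mem_iff_get.mp hs
  rw [← hi]
  simpa using this i
-- chunk 7 : forward direction

lemma cycle_reach {S : Set E} {C : List (E × Bool)} (hC : G.IsCycle C)
    (hCS : ∀ s ∈ C, s.1 ∈ S) {a b : V} (ha : a ∈ C.map G.stepSrc)
    (hb : b ∈ C.map G.stepSrc) : G.ReachIn S a b := by
  obtain ⟨sa, hsa, rfl⟩ := List.mem_map.mp ha
  obtain ⟨sb, hsb, rfl⟩ := List.mem_map.mp hb
  have h1 := (G.reach_of_chain C hC.ne hC.chain hCS hsa).1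
  have h2 := (G.reach_of_chain C hC.ne hC.chain hCS hsb).1
  exact G.reachIn_trans (G.reachIn_symm h1) h2

lemma forward_balanced [DecidableEq E] {X : Set E}
    (hLI : ∀ F : Finset E, ↑F ⊆ X → ∀ g : E → K,
      ∑ e ∈ F, g e • G.Dmat e = 0 → ∀ e ∈ F, g e = 0)
    {C : List (E × Bool)} (hC : G.IsCycle C) (hCX : ∀ s ∈ C, s.1 ∈ X) :
    G.gainProd C ≠ 1 := by
  intro hbal
  set F := (C.map Prod.fst).toFinset with hF
  have hFX : ↑F ⊆ X := by
    intro x hx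
    rw [hF] at hx
    simp only [List.coe_toFinset, Set.mem_setOf_eq] at hx
    obtain ⟨s, hs, rfl⟩ := List.mem_map.mp hx
    exact hCX s hs
  set g : E → K := fun e => ∑ i : Fin C.length,
    if (C.get i).1 = e then G.pcoef C i * G.mu (C.get i) else 0 with hg
  have hswap : ∑ e ∈ F, g e • G.Dmat e
      = ∑ i : Fin C.length, (G.pcoef C i * G.mu (C.get i)) • G.Dmat ((C.get i).1) := by
    have hterm : ∀ e ∈ F, g e • G.Dmat e = ∑ i : Fin C.length,
        if (C.get i).1 = e then (G.pcoef C i * G.mu (C.get i)) • G.Dmat e else 0 := by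
      intro e _
      rw [hg]
      rw [Finset.sum_smul]
      refine Finset.sum_congr rfl fun i _ => ?_
      rw [ite_smul, zero_smul]
    rw [Finset.sum_congr rfl hterm, Finset.sum_comm]
    refine Finset.sum_congr rfl fun i _ => ?_
    have hin : (C.get i).1 ∈ F := by
      rw [hF, List.mem_toFinset]
      exact List.mem_map_of_mem (f := Prod.fst) (List.get_mem _ _)
    rw [Finset.sum_ite_eq F ((C.get i).1) (fun e => (G.pcoef C i * G.mu (C.get i)) • G.Dmat e),
      if_pos hin]
  have hzero : ∑ e ∈ F, g e • G.Dmat e = 0 := by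
    rw [hswap, G.cycle_sum C hC.ne hC.chain hC.closed, hbal]
    simp
  have hiz : C.length - 1 < C.length := by
    have : 0 < C.length := List.length_pos_iff.mpr hC.ne
    omega
  set i0 : Fin C.length := ⟨0, List.length_pos_iff.mpr hC.ne⟩ with hi0
  have hmemF : (C.get i0).1 ∈ F := by
    rw [hF, List.mem_toFinset]
    exact List.mem_map_of_mem (f := Prod.fst) (List.get_mem _ _)
  have hgz := hLI F hFX g hzero ((C.get i0).1) hmemF
  simp only [hg] at hgz
  rw [Finset.sum_eq_single i0] at hgz
  · rw [if_pos rfl] at hgz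
    exact mul_ne_zero (G.pcoef_ne_zero C i0) (G.mu_ne_zero (C.get i0)) hgz
  · intro j _ hji
    rw [if_neg]
    intro hcon
    exact hji (nodup_map_get_inj hC.edges_nodup j i0 hcon)
  · intro hcon; exact absurd (Finset.mem_univ i0) hcon

lemma two_cycles_aux [DecidableEq E] {X : Set E}
    (hLI : ∀ F : Finset E, ↑F ⊆ X → ∀ g : E → K,
      ∑ e ∈ F, g e • G.Dmat e = 0 → ∀ e ∈ F, g e = 0)
    {C₁ C₂ : List (E × Bool)} (h1 : G.IsCycle C₁) (h2 : G.IsCycle C₂)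
    (hX1 : ∀ s ∈ C₁, s.1 ∈ X) (hX2 : ∀ s ∈ C₂, s.1 ∈ X)
    (hconn : ∃ u ∈ C₁.map G.stepSrc, ∃ v ∈ C₂.map G.stepSrc, G.ReachIn X u v)
    (hdiff : ∃ s ∈ C₂, s.1 ∉ C₁.map Prod.fst) : False := by
  classical
  obtain ⟨u, huC1, v, hvC2, huv⟩ := hconn
  obtain ⟨T, hTX, hTreach, hTend⟩ := G.reach_extract huv
  obtain ⟨sstar, hsstar, hestar⟩ := hdiff
  set estar := sstar.1 with hestar_def
  set F : Finset E := (C₁.map Prod.fst).toFinset ∪ (C₂.map Prod.fst).toFinset ∪ T with hFdef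
  have hC1F : ∀ s ∈ C₁, s.1 ∈ (↑F : Set E) := by
    intro s hs
    simp only [hFdef, Finset.coe_union, Set.mem_union, Finset.mem_coe, List.mem_toFinset]
    exact Or.inl (Or.inl (List.mem_map_of_mem (f := Prod.fst) hs))
  have hC2F : ∀ s ∈ C₂, s.1 ∈ (↑F : Set E) := by
    intro s hs
    simp only [hFdef, Finset.coe_union, Set.mem_union, Finset.mem_coe, List.mem_toFinset]
    exact Or.inl (Or.inr (List.mem_map_of_mem (f := Prod.fst) hs))
  have hTF : (↑T : Set E) ⊆ ↑F := by
    intro x hx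
    simp only [hFdef, Finset.coe_union, Set.mem_union, Finset.mem_coe]
    exact Or.inr hx
  have hFX : ↑F ⊆ X := by
    intro x hx
    simp only [hFdef, Finset.coe_union, Set.mem_union, Finset.mem_coe,
      List.mem_toFinset] at hx
    rcases hx with (hx | hx) | hx
    · obtain ⟨s, hs, rfl⟩ := List.mem_map.mp hx; exact hX1 s hs
    · obtain ⟨s, hs, rfl⟩ := List.mem_map.mp hx; exact hX2 s hs
    · exact hTX hx
  set W : Finset V := F.image G.src ∪ F.image G.tgt with hWdef
  have hsupp : ∀ e ∈ F, ∀ v : V, G.Dmat e v ≠ 0 → v ∈ W := by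
    intro e he v hv
    rcases G.Dmat_support hv with rfl | rfl
    · exact Finset.mem_union_left _ (Finset.mem_image_of_mem G.src he)
    · exact Finset.mem_union_right _ (Finset.mem_image_of_mem G.tgt he)
  have hFW : F.card ≤ W.card := G.card_le_of_indep F W hsupp (hLI F hFX)
  -- everything in W is reachable from u inside F
  have hreachW : ∀ x ∈ W, G.ReachIn ↑F u x := by
    intro x hx
    have hx' : ∃ f ∈ F, x = G.src f ∨ x = G.tgt f := by
      simp only [hWdef, Finset.mem_union, Finset.mem_image] at hx
      rcases hx with ⟨f, hf, rfl⟩ | ⟨f, hf, rfl⟩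
      exacts [⟨f, hf, Or.inl rfl⟩, ⟨f, hf, Or.inr rfl⟩]
    obtain ⟨f, hfF, hfx⟩ := hx'
    have hfF' : (f ∈ (C₁.map Prod.fst).toFinset ∨ f ∈ (C₂.map Prod.fst).toFinset) ∨ f ∈ T := by
      simpa only [hFdef, Finset.mem_union] using hfF
    have hxreach : G.ReachIn ↑F u x := by
      rcases hfF' with hf12 | hfT
      · rcases hf12 with hf1 | hf1
        · -- f is an edge of C₁
          rw [List.mem_toFinset] at hf1
          obtain ⟨s, hs, rfl⟩ := List.mem_map.mp hf1
          have hends := G.isCycle_endpoints h1 hs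
          have hxm : x ∈ C₁.map G.stepSrc := by
            rcases hfx with rfl | rfl
            exacts [hends.1, hends.2]
          exact G.cycle_reach h1 hC1F huC1 hxm
        · rw [List.mem_toFinset] at hf1
          obtain ⟨s, hs, rfl⟩ := List.mem_map.mp hf1
          have hends := G.isCycle_endpoints h2 hs
          have hxm : x ∈ C₂.map G.stepSrc := by
            rcases hfx with rfl | rfl
            exacts [hends.1, hends.2]
          have huvF : G.ReachIn ↑F u v := G.reachIn_mono hTF hTreach
          exact G.reachIn_trans huvF (G.cycle_reach h2 hC2F hvC2 hxm)
      · have := hTend f hfT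
        rcases hfx with rfl | rfl
        exacts [G.reachIn_mono hTF this.1, G.reachIn_mono hTF this.2]
    exact hxreach
  -- remove estar with a detour around C₂, then remove an edge of C₁
  have hs1 : C₁.head h1.ne ∈ C₁ := List.head_mem h1.ne
  set fstar := (C₁.head h1.ne).1 with hfstar_def
  have hfstarC1 : fstar ∈ C₁.map Prod.fst := List.mem_map_of_mem (f := Prod.fst) hs1
  have hne_ef : estar ≠ fstar := fun hcon => hestar (hcon ▸ hfstarC1)
  have hestarF : estar ∈ F := by
    simp only [hFdef, Finset.mem_union, List.mem_toFinset]
    exact Or.inl (Or.inr (List.mem_map_of_mem (f := Prod.fst) hsstar))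
  have hfstarF : fstar ∈ F := by
    simp only [hFdef, Finset.mem_union, List.mem_toFinset]
    exact Or.inl (Or.inl hfstarC1)
  -- detour for estar within C₂ edges minus estar
  have hdet2 : G.ReachIn (↑F \ {estar}) (G.src estar) (G.tgt estar) := by
    have hd := G.cycle_detour h2 hsstar
    have hsub : ({f | f ∈ C₂.map Prod.fst} \ {sstar.1}) ⊆ (↑F \ {estar}) := by
      intro y hy
      refine ⟨?_, hy.2⟩
      obtain ⟨s, hs, rfl⟩ := List.mem_map.mp hy.1
      exact hC2F s hs
    have hd' := G.reachIn_mono hsub hd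
    rcases G.step_endpoints sstar with ⟨ha, hb⟩ | ⟨ha, hb⟩
    · rw [ha, hb]; exact G.reachIn_symm hd'
    · rw [ha, hb]; exact hd'
  have hreach1 : ∀ x ∈ W, G.ReachIn (↑F \ {estar}) u x := fun x hx =>
    G.reach_erase hdet2 (hreachW x hx)
  -- detour for fstar within C₁ edges minus fstar (all distinct from estar)
  have hdet1 : G.ReachIn ((↑F \ {estar}) \ {fstar}) (G.src fstar) (G.tgt fstar) := by
    have hd := G.cycle_detour h1 hs1
    have hsub : ({f | f ∈ C₁.map Prod.fst} \ {fstar}) ⊆ ((↑F \ {estar}) \ {fstar}) := by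
      intro y hy
      refine ⟨⟨?_, ?_⟩, hy.2⟩
      · obtain ⟨s, hs, rfl⟩ := List.mem_map.mp hy.1
        exact hC1F s hs
      · intro hcon
        rcases hcon with rfl
        exact hestar hy.1
    have hd' := G.reachIn_mono hsub hd
    rcases G.step_endpoints (C₁.head h1.ne) with ⟨ha, hb⟩ | ⟨ha, hb⟩
    · rw [hfstar_def, ha, hb]; exact G.reachIn_symm hd'
    · rw [hfstar_def, ha, hb]; exact hd'
  have hreach2 : ∀ x ∈ W, G.ReachIn ((↑F \ {estar}) \ {fstar}) u x := fun x hx =>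
    G.reach_erase hdet1 (hreach1 x hx)
  -- counting
  set F2 : Finset E := (F.erase estar).erase fstar with hF2def
  have hF2coe : (↑F2 : Set E) = (↑F \ {estar}) \ {fstar} := by
    simp [hF2def, Finset.coe_erase, Set.diff_diff_comm]
  have hreach3 : ∀ x ∈ W, G.ReachIn ↑F2 u x := by
    intro x hx
    rw [hF2coe]
    exact hreach2 x hx
  obtain ⟨hRfin, hRcard⟩ := G.reach_bound F2.card F2 u le_rfl
  have hWsub : (↑W : Set V) ⊆ {v | G.ReachIn ↑F2 u v} := fun x hx => hreach3 x hx
  have hWR : W.card ≤ {v | G.ReachIn ↑F2 u v}.ncard := by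
    rw [← Set.ncard_coe_finset]
    exact Set.ncard_le_ncard hWsub hRfin
  have hfilter : {e : E | e ∈ F2 ∧ G.ReachIn ↑F2 u (G.src e) ∧
      G.ReachIn ↑F2 u (G.tgt e)}.ncard ≤ F2.card := by
    rw [← Set.ncard_coe_finset]
    exact Set.ncard_le_ncard (fun x hx => hx.1) F2.finite_toSet
  have hF2card : F2.card = F.card - 2 := by
    rw [hF2def, Finset.card_erase_of_mem (Finset.mem_erase.mpr ⟨fun h => hne_ef h.symm, hfstarF⟩),
      Finset.card_erase_of_mem hestarF]
    omega
  have hFcard2 : 2 ≤ F.card := by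
    have : ({estar, fstar} : Finset E) ⊆ F := by
      intro x hx
      rcases Finset.mem_insert.mp hx with rfl | hx
      · exact hestarF
      · rw [Finset.mem_singleton.mp hx]; exact hfstarF
    have := Finset.card_le_card this
    rwa [Finset.card_insert_of_notMem (by simpa using hne_ef), Finset.card_singleton] at this
  omega
-- chunk 8 : path growing engine

lemma tail_append_ne {α : Type*} {l1 l2 : List α} (h : l1 ≠ []) :
    (l1 ++ l2).tail = l1.tail ++ l2 := by
  cases l1 with
  | nil => exact absurd rfl h
  | cons a t => simp

lemma head_append_ne {α : Type*} {l1 l2 : List α} (h : l1 ≠ []) (h2 : l1 ++ l2 ≠ []) :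
    (l1 ++ l2).head h2 = l1.head h := by
  cases l1 with
  | nil => exact absurd rfl h
  | cons a t => rfl

lemma getLast_drop' {α : Type*} {l : List α} {j : ℕ} (h : j < l.length)
    (h2 : l.drop j ≠ []) (h3 : l ≠ []) : (l.drop j).getLast h2 = l.getLast h3 := by
  rw [List.getLast_eq_getElem, List.getLast_eq_getElem, List.getElem_drop]
  congr 1
  rw [List.length_drop]
  omega

lemma Dmat_stepTgt_ne_zero (s : E × Bool) (hl : G.src s.1 ≠ G.tgt s.1) :
    G.Dmat s.1 (G.stepTgt s) ≠ 0 := by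
  rcases G.step_endpoints s with ⟨ha, hb⟩ | ⟨ha, hb⟩
  · rw [← hb]; exact G.Dmat_tgt_ne_zero hl
  · rw [← ha]
    exact G.Dmat_src_ne_zero (fun hc => hl hc.1)

lemma Dmat_stepSrc_ne_zero (s : E × Bool) (hl : G.src s.1 ≠ G.tgt s.1) :
    G.Dmat s.1 (G.stepSrc s) ≠ 0 := by
  rcases G.step_endpoints s with ⟨ha, hb⟩ | ⟨ha, hb⟩
  · rw [← ha]
    exact G.Dmat_src_ne_zero (fun hc => hl hc.1)
  · rw [← hb]; exact G.Dmat_tgt_ne_zero hl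

lemma orient_step {f : E} {y : V} (h : G.Dmat f y ≠ 0) :
    ∃ b : Bool, G.stepSrc (f, b) = y ∧ G.stepTgt (f, b) = (if y = G.src f then G.tgt f else G.src f) := by
  rcases G.Dmat_support h with rfl | h'
  · exact ⟨true, by simp [stepSrc], by simp [stepTgt]⟩
  · subst h'
    by_cases hc : G.tgt f = G.src f
    · exact ⟨true, by simp [stepSrc, hc], by simp [stepTgt, hc]⟩
    · exact ⟨false, by simp [stepSrc], by simp [stepTgt, hc]⟩

/-- the path-growing engine: starting from a simple path, extend until we either
close a cycle or hit the target set `A`. -/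
lemma grow [DecidableEq E] (F : Finset E) (A : Set V)
    (hdeg : ∀ v, v ∉ A → ∀ e ∈ F, G.Dmat e v ≠ 0 → ∃ f ∈ F, f ≠ e ∧ G.Dmat f v ≠ 0) :
    ∀ (k : ℕ) (P : List (E × Bool)) (hne : P ≠ []),
      F.card - P.length ≤ k →
      P.Chain' (fun s t => G.stepTgt s = G.stepSrc t) →
      (∀ s ∈ P, s.1 ∈ F) → (P.map Prod.fst).Nodup →
      (∀ s ∈ P, G.src s.1 ≠ G.tgt s.1) → (P.map G.stepSrc).Nodup →
      (∀ s ∈ P.tail, G.stepSrc s ∉ A) →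
      (∀ s ∈ P, G.stepSrc s ∉ A ∨ G.stepTgt s ∉ A) →
      G.stepTgt (P.getLast hne) ∉ A →
      G.stepTgt (P.getLast hne) ∉ P.map G.stepSrc →
      (∃ C, G.IsCycle C ∧ (∀ s ∈ C, s.1 ∈ F) ∧
        (∀ s ∈ C, G.stepSrc s ∉ A ∨ G.stepTgt s ∉ A) ∧
        (∃ z ∈ C.map G.stepSrc, G.ReachIn ↑F (G.stepSrc (P.head hne)) z)) ∨
      (∃ Q : List (E × Bool), ∃ hQ : Q ≠ [],
        Q.Chain' (fun s t => G.stepTgt s = G.stepSrc t) ∧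
        (∀ s ∈ Q, s.1 ∈ F) ∧ (Q.map Prod.fst).Nodup ∧ (Q.map G.stepSrc).Nodup ∧
        (∀ s ∈ Q.tail, G.stepSrc s ∉ A) ∧
        (∀ s ∈ Q, G.stepSrc s ∉ A ∨ G.stepTgt s ∉ A) ∧
        G.stepSrc (Q.head hQ) = G.stepSrc (P.head hne) ∧
        G.stepTgt (Q.getLast hQ) ∈ A) := by
  intro k
  induction k using Nat.strong_induction_on with
  | _ k ih =>
    intro P hne hk hchain hPF hednd hnl hsrcnd htailA hPA hy1 hy2
    set y := G.stepTgt (P.getLast hne) with hy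
    have hlastmem : P.getLast hne ∈ P := List.getLast_mem hne
    have hlastF : (P.getLast hne).1 ∈ F := hPF _ hlastmem
    have hylast : G.Dmat (P.getLast hne).1 y ≠ 0 :=
      G.Dmat_stepTgt_ne_zero _ (hnl _ hlastmem)
    obtain ⟨f, hfF, hffne, hfy⟩ := hdeg y hy1 _ hlastF hylast
    -- all vertices of P are reachable from the head inside F
    have hreachP : ∀ v, (∃ s ∈ P, G.stepSrc s = v ∨ G.stepTgt s = v) →
        G.ReachIn ↑F (G.stepSrc (P.head hne)) v := by
      rintro v ⟨s, hs, hv⟩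
      have := G.reach_of_chain P hne hchain (fun a ha => hPF a ha) hs
      rcases hv with rfl | rfl
      exacts [this.1, this.2]
    by_cases hlf : G.src f = G.tgt f
    · -- unbalanced loop at y : an immediate cycle
      have hyf : y = G.src f := by
        rcases G.Dmat_support hfy with h' | h'
        exacts [h', h'.trans hlf.symm]
      refine Or.inl ⟨[(f, true)], ?_, ?_, ?_, ?_⟩
      · exact ⟨by simp, List.isChain_singleton _,
          by simp [stepSrc, stepTgt, hlf], by simp, by simp⟩
      · intro s hs; rw [List.mem_singleton.mp hs]; exact hfF
      · intro s hs; rw [List.mem_singleton.mp hs]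
        left
        show G.stepSrc (f, true) ∉ A
        have : G.stepSrc (f, true) = y := by simp [stepSrc, hyf]
        rw [this]; exact hy1
      · refine ⟨y, ?_, hreachP y ⟨P.getLast hne, hlastmem, Or.inr rfl⟩⟩
        simp [stepSrc, hyf]
    · -- a non-loop edge f at y, extend the path
      obtain ⟨b, hbsrc, _⟩ := G.orient_step hfy
      set s' : E × Bool := (f, b) with hs'
      have hfP : f ∉ P.map Prod.fst := by
        intro hcon
        obtain ⟨s, hsP, hs1⟩ := List.mem_map.mp hcon
        obtain ⟨i, hi⟩ := List.mem_iff_get.mp hsP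
        have hyend : y = G.stepSrc s ∨ y = G.stepTgt s := by
          rcases G.Dmat_support hfy with h' | h' <;>
            rcases G.step_endpoints s with ⟨ha, hb'⟩ | ⟨ha, hb'⟩
          · exact Or.inl (by rw [h', ← hs1, ha])
          · exact Or.inr (by rw [h', ← hs1, ha])
          · exact Or.inr (by rw [h', ← hs1, hb'])
          · exact Or.inl (by rw [h', ← hs1, hb'])
        rcases hyend with h' | h'
        · exact hy2 (h' ▸ List.mem_map_of_mem (f := G.stepSrc) hsP)
        · -- y = stepTgt s ; s is not the last step, so stepTgt s is a src
          by_cases hilt : (i : ℕ) + 1 < P.length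
          · have hcg := chain'_iff_get_old.mp hchain i (by omega)
            rw [hi] at hcg
            exact hy2 (by
              rw [h', hcg]
              exact List.mem_map_of_mem (f := G.stepSrc) (List.get_mem _ _))
          · have : P.getLast hne = s := by
              rw [getLast_eq_get_old, ← hi]
              congr 1
              have := i.2
              exact Fin.ext (by simp; omega)
            exact hffne (by rw [← hs1, ← this])
      set P' := P ++ [s'] with hP'
      have hP'ne : P' ≠ [] := by simp [hP']
      have hchain' : P'.Chain' (fun s t => G.stepTgt s = G.stepSrc t) := by
        rw [hP', chain'_append_old]
        refine ⟨hchain, List.isChain_singleton _, ?_⟩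
        intro x hx y' hy'
        simp only [List.head?_cons, Option.mem_def, Option.some.injEq] at hy'
        rw [List.getLast?_eq_getLast hne] at hx
        have hx' : P.getLast hne = x := by simpa using hx
        rw [← hy', ← hx', hbsrc]
      have hP'F : ∀ s ∈ P', s.1 ∈ F := by
        intro s hs
        rcases List.mem_append.mp hs with hs | hs
        · exact hPF s hs
        · rw [List.mem_singleton.mp hs]; exact hfF
      have hednd' : (P'.map Prod.fst).Nodup := by
        rw [hP', List.map_append]
        rw [List.nodup_append']
        exact ⟨hednd, by simp, by simpa using fun hcon => hfP hcon⟩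
      have hnl' : ∀ s ∈ P', G.src s.1 ≠ G.tgt s.1 := by
        intro s hs
        rcases List.mem_append.mp hs with hs | hs
        · exact hnl s hs
        · rw [List.mem_singleton.mp hs]; exact hlf
      have hsrcnd' : (P'.map G.stepSrc).Nodup := by
        rw [hP', List.map_append]
        rw [List.nodup_append']
        refine ⟨hsrcnd, by simp, ?_⟩
        intro a ha hcon
        simp only [List.map_cons, List.map_nil, List.mem_cons, List.not_mem_nil,
          or_false] at hcon
        rw [hcon, hbsrc] at ha
        exact hy2 ha
      have htailA' : ∀ s ∈ P'.tail, G.stepSrc s ∉ A := by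
        rw [hP', tail_append_ne hne]
        intro s hs
        rcases List.mem_append.mp hs with hs | hs
        · exact htailA s hs
        · rw [List.mem_singleton.mp hs, hbsrc]; exact hy1
      have hPA' : ∀ s ∈ P', G.stepSrc s ∉ A ∨ G.stepTgt s ∉ A := by
        intro s hs
        rcases List.mem_append.mp hs with hs | hs
        · exact hPA s hs
        · rw [List.mem_singleton.mp hs]
          left; rw [hbsrc]; exact hy1
      have hlast' : P'.getLast hP'ne = s' := List.getLast_concat
      have hhead' : P'.head hP'ne = P.head hne := head_append_ne hne hP'ne
      set y' := G.stepTgt s' with hy'def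
      by_cases hy'A : G.stepTgt (P'.getLast hP'ne) ∈ A
      · -- path reaching A found
        right
        exact ⟨P', hP'ne, hchain', hP'F, hednd', hsrcnd', htailA', hPA',
          by rw [hhead'], hy'A⟩
      · by_cases hy's : G.stepTgt (P'.getLast hP'ne) ∈ P'.map G.stepSrc
        · -- cycle found as a suffix
          left
          obtain ⟨sj, hsjP', hsj⟩ := List.mem_map.mp hy's
          obtain ⟨j, hj⟩ := List.mem_iff_get.mp hsjP'
          refine ⟨P'.drop j, ?_, ?_, ?_, ?_⟩
          · have hdne : P'.drop j ≠ [] := by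
              have := j.2
              intro hcon
              have := List.length_drop (i := (j : ℕ)) (l := P')
              rw [hcon] at this
              simp at this
              omega
            refine ⟨hdne, hchain'.suffix (List.drop_suffix _ _), ?_, ?_, ?_⟩
            · rw [getLast_drop' j.2 hdne hP'ne]
              have hh : (P'.drop (j : ℕ)).head hdne = P'.get j := by
                rw [List.head_drop]
                simp
              rw [hh, hj, hsj]
            · rw [List.map_drop]
              exact (List.drop_sublist _ _).nodup hednd'
            · rw [List.map_drop]
              exact (List.drop_sublist _ _).nodup hsrcnd'
          · intro s hs; exact hP'F s (List.mem_of_mem_drop hs)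
          · intro s hs; exact hPA' s (List.mem_of_mem_drop hs)
          · refine ⟨G.stepSrc (P'.get j), ?_, ?_⟩
            · refine List.mem_map_of_mem (f := G.stepSrc) ?_
              have hh : (P'.drop (j : ℕ)).head (by
                  intro hcon
                  have := List.length_drop (i := (j : ℕ)) (l := P')
                  rw [hcon] at this
                  simp at this
                  omega
                  ) = P'.get j := by
                rw [List.head_drop]; simp
              rw [← hh]
              exact List.head_mem _
            · rw [← hhead']
              have hjmem : P'.get j ∈ P' := List.get_mem _ _
              refine G.reach_of_chain P' hP'ne hchain' (fun a ha => hP'F a ha) hjmem |>.1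
        · -- extend and recurse
          have hlen : P.length < F.card := by
            have hsub : (P'.map Prod.fst).toFinset ⊆ F := by
              intro x hx
              rw [List.mem_toFinset] at hx
              obtain ⟨s, hs, rfl⟩ := List.mem_map.mp hx
              exact hP'F s hs
            have hcard := Finset.card_le_card hsub
            rw [List.toFinset_card_of_nodup hednd'] at hcard
            simp only [hP', List.length_map, List.length_append, List.length_singleton] at hcard
            omega
          have hkpos : 1 ≤ k := by omega
          have := ih (k - 1) (by omega) P' hP'ne (by
              simp only [hP', List.length_append, List.length_singleton]
              omega) hchain' hP'F hednd' hnl' hsrcnd' htailA' hPA' hy'A hy's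
          rcases this with ⟨C, hC⟩ | ⟨Q, hQne, hQ⟩
          · exact Or.inl ⟨C, hC.1, hC.2.1, hC.2.2.1, by
              rw [← hhead']; exact hC.2.2.2⟩
          · refine Or.inr ⟨Q, hQne, hQ.1, hQ.2.1, hQ.2.2.1, hQ.2.2.2.1, hQ.2.2.2.2.1,
              hQ.2.2.2.2.2.1, ?_, hQ.2.2.2.2.2.2.2⟩
            rw [← hhead']
            exact hQ.2.2.2.2.2.2.1
-- chunk 9 : crossing and arc surgery

lemma crossing {T : Set E} {S : Set V} {x v : V} (hx : x ∈ S) (hv : v ∉ S)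
    (h : G.ReachIn T x v) :
    ∃ e ∈ T, (G.src e ∈ S ∧ G.tgt e ∉ S) ∨ (G.tgt e ∈ S ∧ G.src e ∉ S) := by
  induction h with
  | refl => exact absurd hx hv
  | @tail b c hb step ih =>
    by_cases hbS : b ∈ S
    · obtain ⟨e, heT, hor⟩ := step
      rcases hor with ⟨h1, h2⟩ | ⟨h1, h2⟩
      · exact ⟨e, heT, Or.inl ⟨h1 ▸ hbS, h2 ▸ hv⟩⟩
      · exact ⟨e, heT, Or.inr ⟨h2 ▸ hbS, h1 ▸ hv⟩⟩
    · exact ih hbS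

lemma nodup_get_not_mem_take {α : Type*} {l : List α} (h : l.Nodup) {kk : ℕ}
    (hkk : kk < l.length) : l.get ⟨kk, hkk⟩ ∉ l.take kk := by
  have hsplit : l.take kk ++ l.drop kk = l := List.take_append_drop kk l
  have h2 : (l.take kk ++ l.drop kk).Nodup := by rw [hsplit]; exact h
  have hd := (List.nodup_append'.mp h2).2.2
  intro hcon
  have hdne : l.drop kk ≠ [] := by
    intro hc
    have := List.length_drop (i := kk) (l := l)
    rw [hc] at this
    simp at this
    omega
  have hh : (l.drop kk).head hdne = l.get ⟨kk, hkk⟩ := by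
    rw [List.head_drop]; simp
  exact hd hcon (by rw [← hh]; exact List.head_mem _)

lemma getLast_take {α : Type*} {l : List α} {k : ℕ} (hk : k < l.length) (h0 : k ≠ 0)
    (hne : l.take k ≠ []) :
    (l.take k).getLast hne = l.get ⟨k - 1, by omega⟩ := by
  rw [List.getLast_eq_getElem, List.get_eq_getElem, List.getElem_take]
  congr 1
  simp [List.length_take]
  omega

lemma arc_surgery {C Q : List (E × Bool)} (hC : G.IsCycle C)
    (hQne : Q ≠ [])
    (hQchain : Q.Chain' (fun s t => G.stepTgt s = G.stepSrc t))
    (hQed : (Q.map Prod.fst).Nodup)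
    (hQsrc : (Q.map G.stepSrc).Nodup)
    (hQdisj : ∀ s ∈ Q, s.1 ∉ C.map Prod.fst)
    (htail : ∀ s ∈ Q.tail, G.stepSrc s ∉ C.map G.stepSrc)
    (hx : G.stepSrc (Q.head hQne) ∈ C.map G.stepSrc)
    (hy : G.stepTgt (Q.getLast hQne) ∈ C.map G.stepSrc) :
    ∃ C₂, G.IsCycle C₂ ∧
      (∀ s ∈ C₂, s.1 ∈ Q.map Prod.fst ∨ s.1 ∈ C.map Prod.fst) ∧
      (Q.head hQne).1 ∈ C₂.map Prod.fst ∧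
      (∃ z ∈ C₂.map G.stepSrc, z ∈ C.map G.stepSrc) := by
  set x := G.stepSrc (Q.head hQne) with hxdef
  set y := G.stepTgt (Q.getLast hQne) with hydef
  by_cases hxy : x = y
  · refine ⟨Q, ⟨hQne, hQchain, hxy.symm, hQed, hQsrc⟩, ?_, ?_, ⟨x, ?_, hx⟩⟩
    · intro s hs; exact Or.inl (List.mem_map_of_mem (f := Prod.fst) hs)
    · exact List.mem_map_of_mem (f := Prod.fst) (List.head_mem hQne)
    · rw [hxdef]; exact List.mem_map_of_mem (f := G.stepSrc) (List.head_mem hQne)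
  · obtain ⟨sy, hsy, hsyx⟩ := List.mem_map.mp hy
    obtain ⟨iy, hiy⟩ := List.mem_iff_get.mp hsy
    set R := C.rotate (iy : ℕ) with hRdef
    have hRC := G.isCycle_rotate hC (iy : ℕ)
    have hRne := hRC.ne
    have hRhead : R.head hRne = C.get iy := head_rotate iy.2 hRne
    have hRheady : G.stepSrc (R.head hRne) = y := by rw [hRhead, hiy, hsyx]
    have hRmemC : ∀ a : E × Bool, a ∈ R ↔ a ∈ C := fun a => List.mem_rotate
    have hsrcsR : R.map G.stepSrc = (C.map G.stepSrc).rotate (iy : ℕ) :=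
      List.map_rotate _ _ _
    have hxR : x ∈ R.map G.stepSrc := by
      obtain ⟨sx, hsx, hsxx⟩ := List.mem_map.mp hx
      rw [← hsxx]
      exact List.mem_map_of_mem (f := G.stepSrc) ((hRmemC sx).mpr hsx)
    obtain ⟨sx', hsx'R, hsx'x⟩ := List.mem_map.mp hxR
    obtain ⟨kx, hkx⟩ := List.mem_iff_get.mp hsx'R
    have hkx0 : (kx : ℕ) ≠ 0 := by
      intro hc
      apply hxy
      have h0 : R.get kx = R.head hRne := by
        rw [← List.get_mk_zero (List.length_pos_iff.mpr hRne)]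
        congr 1
        exact Fin.ext (by simp [hc])
      rw [← hsx'x, ← hkx, h0, hRheady]
    set arc := R.take (kx : ℕ) with harcdef
    have harcne : arc ≠ [] := by
      rw [harcdef, Ne, List.take_eq_nil_iff]
      push_neg
      exact ⟨hkx0, hRne⟩
    have harchain : arc.Chain' (fun s t => G.stepTgt s = G.stepSrc t) :=
      hRC.chain.take _
    have harchead : arc.head harcne = R.head hRne := List.head_take harcne
    have harcsubC : ∀ a ∈ arc, a ∈ C := fun a ha =>
      (hRmemC a).mp ((List.take_sublist _ _).subset ha)
    have harclast : G.stepTgt (arc.getLast harcne) = x := by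
      have hlast_eq : arc.getLast harcne = R.get ⟨(kx : ℕ) - 1, by omega⟩ :=
        getLast_take kx.2 hkx0 harcne
      rw [hlast_eq]
      have hklen : (kx : ℕ) < R.length := kx.2
      have hcg : G.stepTgt (R.get ⟨(kx : ℕ) - 1, by omega⟩)
          = G.stepSrc (R.get ⟨(kx : ℕ) - 1 + 1, by omega⟩) :=
        chain'_iff_get_old.mp hRC.chain ((kx : ℕ) - 1)
          (by show (kx : ℕ) - 1 < R.length - 1; omega)
      have hidx : R.get ⟨(kx : ℕ) - 1 + 1, by omega⟩ = R.get kx := by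
        congr 1
        exact Fin.ext (by simp; omega)
      rw [hcg, hidx, ← hsx'x, hkx]
    set C₂ := Q ++ arc with hC₂def
    have hC₂ne : C₂ ≠ [] := by simp [hC₂def, hQne]
    have hlink : G.stepTgt (Q.getLast hQne) = G.stepSrc (arc.head harcne) := by
      rw [harchead, hRheady, ← hydef]
    have hchain2 : C₂.Chain' (fun s t => G.stepTgt s = G.stepSrc t) := by
      rw [hC₂def, chain'_append_old]
      refine ⟨hQchain, harchain, ?_⟩
      intro a ha b hb
      rw [List.getLast?_eq_getLast hQne] at ha
      rw [List.head?_eq_head harcne] at hb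
      have ha' : Q.getLast hQne = a := by simpa using ha
      have hb' : arc.head harcne = b := by simpa using hb
      rw [← ha', ← hb']
      exact hlink
    have hclosed : G.stepTgt (C₂.getLast hC₂ne) = G.stepSrc (C₂.head hC₂ne) := by
      have h1 : C₂.getLast hC₂ne = arc.getLast harcne := by
        have hone : (Q ++ arc).getLast (by simp [hQne]) = arc.getLast harcne := by
          rw [List.getLast_append]
          rw [dif_neg (by simpa using harcne)]
        exact hone
      have h2 : C₂.head hC₂ne = Q.head hQne := head_append_ne hQne hC₂ne
      rw [h1, h2, harclast, ← hxdef]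
    have hednd2 : (C₂.map Prod.fst).Nodup := by
      rw [hC₂def, List.map_append, List.nodup_append']
      refine ⟨hQed, ((List.take_sublist _ _).map Prod.fst).nodup hRC.edges_nodup, ?_⟩
      intro a haQ haarc
      obtain ⟨s, hsQ, hs1⟩ := List.mem_map.mp haQ
      obtain ⟨t, htarc, ht1⟩ := List.mem_map.mp haarc
      exact hQdisj s hsQ (by
        rw [hs1, ← ht1]
        exact List.mem_map_of_mem (f := Prod.fst) (harcsubC t htarc))
    have hsrcnd2 : (C₂.map G.stepSrc).Nodup := by
      rw [hC₂def, List.map_append, List.nodup_append']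
      refine ⟨hQsrc, ((List.take_sublist _ _).map G.stepSrc).nodup hRC.verts_nodup, ?_⟩
      intro a haQ haarc
      have haarc' : a ∈ (R.map G.stepSrc).take (kx : ℕ) := by
        rw [← List.map_take]
        exact haarc
      obtain ⟨s, hsQ, hs1⟩ := List.mem_map.mp haQ
      rw [← List.cons_head_tail hQne, List.mem_cons] at hsQ
      rcases hsQ with rfl | hsQ
      · -- a = x
        have hxa : a = x := by rw [← hs1, hxdef]
        have hgetmap : (R.map G.stepSrc).get ⟨(kx : ℕ), by simpa using kx.2⟩ = x := by
          rw [List.get_eq_getElem, List.getElem_map, ← List.get_eq_getElem]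
          rw [← hsx'x]
          congr 1
        have := nodup_get_not_mem_take hRC.verts_nodup
          (by simpa using kx.2 : (kx : ℕ) < (R.map G.stepSrc).length)
        rw [hgetmap] at this
        rw [hxa] at haarc'
        exact this haarc'
      · -- a is an interior vertex of Q, not on C
        have : a ∈ C.map G.stepSrc := by
          have : a ∈ R.map G.stepSrc := (List.take_sublist _ _).subset haarc'
          rw [hsrcsR] at this
          exact List.mem_rotate.mp this
        exact (hs1 ▸ htail s hsQ) this
    refine ⟨C₂, ⟨hC₂ne, hchain2, hclosed, hednd2, hsrcnd2⟩, ?_, ?_, ⟨y, ?_, hy⟩⟩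
    · intro s hs
      rcases List.mem_append.mp hs with hs | hs
      · exact Or.inl (List.mem_map_of_mem (f := Prod.fst) hs)
      · exact Or.inr (List.mem_map_of_mem (f := Prod.fst) (harcsubC s hs))
    · exact List.mem_map_of_mem (f := Prod.fst)
        (List.mem_append.mpr (Or.inl (List.head_mem hQne)))
    · have : arc.head harcne ∈ C₂ := List.mem_append.mpr (Or.inr (List.head_mem harcne))
      have h2 : G.stepSrc (arc.head harcne) = y := by rw [harchead, hRheady]
      rw [← h2]
      exact List.mem_map_of_mem (f := G.stepSrc) this
-- chunk 10 : backward direction and main theorem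

lemma cycle_edge_endpoints_in {C : List (E × Bool)} (hC : G.IsCycle C) {s : E × Bool}
    (hsC : s.1 ∈ C.map Prod.fst) :
    G.stepSrc s ∈ C.map G.stepSrc ∧ G.stepTgt s ∈ C.map G.stepSrc := by
  obtain ⟨t, ht, ht1⟩ := List.mem_map.mp hsC
  have hend := G.isCycle_endpoints hC ht
  rw [ht1] at hend
  rcases G.step_endpoints s with ⟨ha, hb⟩ | ⟨ha, hb⟩
  · exact ⟨ha ▸ hend.1, hb ▸ hend.2⟩
  · exact ⟨hb ▸ hend.2, ha ▸ hend.1⟩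

lemma component_cycle [DecidableEq E] {X : Set E} (F : Finset E) (hFX : ↑F ⊆ X)
    (hbal : ∀ C, G.IsCycle C → (∀ s ∈ C, s.1 ∈ X) → G.gainProd C ≠ 1)
    (htwo : ∀ C₁ C₂, G.IsCycle C₁ → G.IsCycle C₂ → (∀ s ∈ C₁, s.1 ∈ X) →
      (∀ s ∈ C₂, s.1 ∈ X) →
      (∃ u ∈ C₁.map G.stepSrc, ∃ v ∈ C₂.map G.stepSrc, G.ReachIn X u v) →
      {e | e ∈ C₁.map Prod.fst} = {e | e ∈ C₂.map Prod.fst})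
    (hdeg : ∀ v, ∀ e ∈ F, G.Dmat e v ≠ 0 → ∃ f ∈ F, f ≠ e ∧ G.Dmat f v ≠ 0)
    {C : List (E × Bool)} (hC : G.IsCycle C) (hCF : ∀ s ∈ C, s.1 ∈ F)
    {estar : E} (heF : estar ∈ F) (heC : estar ∉ C.map Prod.fst)
    (hreach : ∃ z ∈ C.map G.stepSrc, G.ReachIn ↑F z (G.src estar)) : False := by
  have hCX : ∀ s ∈ C, s.1 ∈ X := fun s hs => hFX (hCF s hs)
  have hCedF : ∀ a : E, a ∈ C.map Prod.fst → a ∈ F := by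
    intro a ha
    obtain ⟨t, ht, rfl⟩ := List.mem_map.mp ha
    exact hCF t ht
  have hkill : ∀ C₂, G.IsCycle C₂ → (∀ s ∈ C₂, s.1 ∈ F) →
      (∃ s ∈ C₂, s.1 ∉ C.map Prod.fst) →
      (∃ z ∈ C₂.map G.stepSrc, ∃ z' ∈ C.map G.stepSrc, G.ReachIn ↑F z' z) → False := by
    rintro C₂ h2 h2F ⟨s, hs, hsC⟩ ⟨z, hz, z', hz', hr⟩
    have heq := htwo C C₂ hC h2 hCX (fun a ha => hFX (h2F a ha))
      ⟨z', hz', z, hz, G.reachIn_mono hFX hr⟩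
    have : s.1 ∈ {e | e ∈ C.map Prod.fst} := by
      rw [heq]; exact List.mem_map_of_mem (f := Prod.fst) hs
    exact hsC this
  obtain ⟨z0, hz0, hz0r⟩ := hreach
  by_cases hloop : G.src estar = G.tgt estar
  · have hcyc : G.IsCycle [(estar, true)] := ⟨by simp, List.isChain_singleton _,
      by simp [stepSrc, stepTgt, hloop], by simp, by simp⟩
    exact hkill [(estar, true)] hcyc
      (by intro s hs; rw [List.mem_singleton.mp hs]; exact heF)
      ⟨(estar, true), by simp, by simpa using heC⟩
      ⟨G.src estar, by simp [stepSrc], z0, hz0, hz0r⟩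
  · by_cases hchord : G.src estar ∈ C.map G.stepSrc ∧ G.tgt estar ∈ C.map G.stepSrc
    · -- chord case: single-step path surgery
      obtain ⟨C₂, h2cyc, h2edges, h2head, z, hzC₂, hzC⟩ :=
        G.arc_surgery hC (Q := [(estar, true)]) (by simp) (List.isChain_singleton _)
          (by simp) (by simp)
          (by intro s hs; rw [List.mem_singleton.mp hs]; simpa using heC)
          (by simp)
          (by simpa [stepSrc] using hchord.1)
          (by
            show G.stepTgt (([(estar, true)]).getLast (by simp)) ∈ _
            simpa [stepTgt] using hchord.2)
      refine hkill C₂ h2cyc ?_ ?_ ⟨z, hzC₂, z, hzC, G.reachIn_refl z⟩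
      · intro s hs
        rcases h2edges s hs with hsQ | hsC
        · have : s.1 = estar := by simpa using hsQ
          rw [this]; exact heF
        · exact hCedF _ hsC
      · have : (([(estar, true)]).head (by simp)).1 ∈ C₂.map Prod.fst := h2head
        obtain ⟨t, htC₂, ht1⟩ := List.mem_map.mp this
        exact ⟨t, htC₂, by rw [ht1]; simpa using heC⟩
    · -- there is a crossing step out of the cycle's vertex set
      have hs0 : ∃ s₀ : E × Bool, s₀.1 ∈ F ∧ s₀.1 ∉ C.map Prod.fst ∧
          G.stepSrc s₀ ∈ C.map G.stepSrc ∧ G.stepTgt s₀ ∉ C.map G.stepSrc ∧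
          G.src s₀.1 ≠ G.tgt s₀.1 := by
        by_cases hsrcA : G.src estar ∈ C.map G.stepSrc
        · have htgtA : G.tgt estar ∉ C.map G.stepSrc := fun h => hchord ⟨hsrcA, h⟩
          exact ⟨(estar, true), heF, by simpa using heC,
            by simpa [stepSrc] using hsrcA, by simpa [stepTgt] using htgtA, hloop⟩
        · obtain ⟨ecr, hecrF, hor⟩ := G.crossing (T := (↑F : Set E))
            (S := {v | v ∈ C.map G.stepSrc}) hz0 hsrcA hz0r
          have hecrnl : G.src ecr ≠ G.tgt ecr := by
            rcases hor with ⟨h1, h2⟩ | ⟨h1, h2⟩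
            · exact fun hc => h2 (hc ▸ h1)
            · exact fun hc => h2 (hc.symm ▸ h1)
          have hecrC : ecr ∉ C.map Prod.fst := by
            intro hcon
            obtain ⟨t, ht, ht1⟩ := List.mem_map.mp hcon
            have hend := G.isCycle_endpoints hC ht
            rw [ht1] at hend
            rcases hor with ⟨_, h2⟩ | ⟨_, h2⟩
            · exact h2 hend.2
            · exact h2 hend.1
          rcases hor with ⟨h1, h2⟩ | ⟨h1, h2⟩
          · exact ⟨(ecr, true), hecrF, by simpa using hecrC,
              by simpa [stepSrc] using h1, by simpa [stepTgt] using h2, hecrnl⟩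
          · exact ⟨(ecr, false), hecrF, by simpa using hecrC,
              by simpa [stepSrc] using h1, by simpa [stepTgt] using h2, hecrnl⟩
      obtain ⟨s₀, hs₀F, hs₀C, hs₀src, hs₀tgt, hs₀nl⟩ := hs0
      have hgrow := G.grow F {v | v ∈ C.map G.stepSrc}
        (fun v _ => hdeg v) F.card [s₀] (by simp)
        (by simp) (List.isChain_singleton _)
        (by intro s hs; rw [List.mem_singleton.mp hs]; exact hs₀F)
        (by simp)
        (by intro s hs; rw [List.mem_singleton.mp hs]; exact hs₀nl)
        (by simp)
        (by simp)
        (by intro s hs; rw [List.mem_singleton.mp hs]; exact Or.inr hs₀tgt)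
        (by simpa using hs₀tgt)
        (by
          simp only [List.map_singleton, List.getLast_singleton, List.mem_singleton]
          intro hcon
          exact hs₀tgt (hcon ▸ hs₀src))
      have hCpoints : ∀ s : E × Bool, s.1 ∈ C.map Prod.fst →
          G.stepSrc s ∈ C.map G.stepSrc ∧ G.stepTgt s ∈ C.map G.stepSrc :=
        fun s hs => G.cycle_edge_endpoints_in hC hs
      rcases hgrow with ⟨C₂, h2cyc, h2F, h2A, z, hzC₂, hzreach⟩ | hpath
      · -- a cycle disjoint from C's vertex set boundary
        refine hkill C₂ h2cyc h2F ?_ ?_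
        · refine ⟨C₂.head h2cyc.ne, List.head_mem _, ?_⟩
          intro hcon
          rcases h2A _ (List.head_mem h2cyc.ne) with h | h
          · exact h (by simpa using (hCpoints _ hcon).1)
          · exact h (by simpa using (hCpoints _ hcon).2)
        · refine ⟨z, hzC₂, G.stepSrc s₀, ?_, ?_⟩
          · exact hs₀src
          · simpa using hzreach
      · obtain ⟨Q, hQne, hQchain, hQF, hQed, hQsrc, hQtail, hQA, hQhead, hQlast⟩ := hpath
        have hQdisj : ∀ s ∈ Q, s.1 ∉ C.map Prod.fst := by
          intro s hs hcon
          rcases hQA s hs with h | h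
          · exact h (by simpa using (hCpoints s hcon).1)
          · exact h (by simpa using (hCpoints s hcon).2)
        obtain ⟨C₂, h2cyc, h2edges, h2head, z, hzC₂, hzC⟩ :=
          G.arc_surgery hC hQne hQchain hQed hQsrc hQdisj
            (by intro s hs; simpa using hQtail s hs)
            (by rw [hQhead]; simpa using hs₀src)
            (by simpa using hQlast)
        refine hkill C₂ h2cyc ?_ ?_ ⟨z, hzC₂, z, hzC, G.reachIn_refl z⟩
        · intro s hs
          rcases h2edges s hs with hsQ | hsC
          · obtain ⟨t, ht, ht1⟩ := List.mem_map.mp hsQ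
            rw [← ht1]; exact hQF t ht
          · exact hCedF _ hsC
        · obtain ⟨t, htC₂, ht1⟩ := List.mem_map.mp h2head
          exact ⟨t, htC₂, by rw [ht1]; exact hQdisj _ (List.head_mem hQne)⟩

lemma backward_master [DecidableEq E] {X : Set E}
    (hbal : ∀ C, G.IsCycle C → (∀ s ∈ C, s.1 ∈ X) → G.gainProd C ≠ 1)
    (htwo : ∀ C₁ C₂, G.IsCycle C₁ → G.IsCycle C₂ → (∀ s ∈ C₁, s.1 ∈ X) →
      (∀ s ∈ C₂, s.1 ∈ X) →
      (∃ u ∈ C₁.map G.stepSrc, ∃ v ∈ C₂.map G.stepSrc, G.ReachIn X u v) →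
      {e | e ∈ C₁.map Prod.fst} = {e | e ∈ C₂.map Prod.fst}) :
    ∀ (n : ℕ) (F : Finset E), F.card ≤ n → ↑F ⊆ X → ∀ g : E → K,
      ∑ e ∈ F, g e • G.Dmat e = 0 → ∀ e ∈ F, g e = 0 := by
  intro n
  induction n with
  | zero =>
    intro F hcard _ g _ e he
    rw [Finset.card_eq_zero.mp (Nat.le_zero.mp hcard)] at he
    simp at he
  | succ n ih =>
    intro F hcard hFX g hsum e0 he0
    by_cases hdeg : ∀ v, ∀ e ∈ F, G.Dmat e v ≠ 0 → ∃ f ∈ F, f ≠ e ∧ G.Dmat f v ≠ 0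
    · -- minimum degree two: the component of e0 is a single unbalanced cycle
      -- find a cycle through/near e0
      have hcyc : ∃ C, G.IsCycle C ∧ (∀ s ∈ C, s.1 ∈ F) ∧
          (∃ z ∈ C.map G.stepSrc, G.ReachIn ↑F z (G.src e0)) := by
        by_cases hloop : G.src e0 = G.tgt e0
        · refine ⟨[(e0, true)], ⟨by simp, List.isChain_singleton _,
            by simp [stepSrc, stepTgt, hloop], by simp, by simp⟩,
            (by intro s hs; rw [List.mem_singleton.mp hs]; exact he0),
            ⟨G.src e0, by simp [stepSrc], G.reachIn_refl _⟩⟩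
        · have hgrow := G.grow F ∅ (fun v _ => hdeg v) F.card [(e0, true)] (by simp)
            (by simp) (List.isChain_singleton _)
            (by intro s hs; rw [List.mem_singleton.mp hs]; exact he0)
            (by simp)
            (by intro s hs; rw [List.mem_singleton.mp hs]; exact hloop)
            (by simp)
            (by simp)
            (by intro s hs; rw [List.mem_singleton.mp hs]; exact Or.inl (Set.notMem_empty _))
            (Set.notMem_empty _)
            (by
              simp only [List.map_singleton, List.getLast_singleton, List.mem_singleton]
              show ¬ G.stepTgt (e0, true) = G.stepSrc (e0, true)
              simpa [stepSrc, stepTgt] using fun hc => hloop hc.symm)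
          rcases hgrow with ⟨C, hCcyc, hCF, _hCA, z, hz, hzr⟩ | ⟨Q, hQne, hQ⟩
          · refine ⟨C, hCcyc, hCF, z, hz, ?_⟩
            have : G.stepSrc ((e0, true)) = G.src e0 := by simp [stepSrc]
            rw [← this]
            exact G.reachIn_symm (by simpa using hzr)
          · exact absurd hQ.2.2.2.2.2.2.2 (Set.notMem_empty _)
      obtain ⟨C, hCcyc, hCF, hCreach⟩ := hcyc
      have hCX : ∀ s ∈ C, s.1 ∈ X := fun s hs => hFX (hCF s hs)
      -- e0 is an edge of C
      have he0C : e0 ∈ C.map Prod.fst := by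
        by_contra hcon
        exact G.component_cycle F hFX hbal htwo hdeg hCcyc hCF he0 hcon hCreach
      -- every edge of F touching a vertex of C is an edge of C
      have hF1 : ∀ f ∈ F, ∀ v : V, G.Dmat f v ≠ 0 → v ∈ C.map G.stepSrc →
          f ∈ C.map Prod.fst := by
        intro f hf v hfv hvC
        by_contra hcon
        refine G.component_cycle F hFX hbal htwo hdeg hCcyc hCF hf hcon ⟨v, hvC, ?_⟩
        rcases G.Dmat_support hfv with rfl | rfl
        · exact G.reachIn_refl _
        · exact G.reachIn_symm (G.reachIn_edge f (by simpa using hf))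
      -- the dependency restricts to the edges of C
      have hsub : (C.map Prod.fst).toFinset ⊆ F := by
        intro a ha
        rw [List.mem_toFinset] at ha
        obtain ⟨t, ht, rfl⟩ := List.mem_map.mp ha
        exact hCF t ht
      have hzero : ∑ e ∈ (C.map Prod.fst).toFinset, g e • G.Dmat e = 0 := by
        funext v
        simp only [Finset.sum_apply, Pi.smul_apply, smul_eq_mul, Pi.zero_apply]
        by_cases hvC : v ∈ C.map G.stepSrc
        · have hfull := congrFun hsum v
          simp only [Finset.sum_apply, Pi.smul_apply, smul_eq_mul, Pi.zero_apply] at hfull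
          rw [← hfull]
          refine Finset.sum_subset hsub ?_
          intro x hxF hxC
          have hDx : G.Dmat x v = 0 := by
            by_contra hcon
            exact hxC (List.mem_toFinset.mpr (hF1 x hxF v hcon hvC))
          rw [hDx, mul_zero]
        · refine Finset.sum_eq_zero fun f hf => ?_
          rw [List.mem_toFinset] at hf
          have : G.Dmat f v = 0 := by
            by_contra hcon
            obtain ⟨t, ht, rfl⟩ := List.mem_map.mp hf
            have hend := G.isCycle_endpoints hCcyc ht
            rcases G.Dmat_support hcon with rfl | rfl
            · exact hvC hend.1
            · exact hvC hend.2
          rw [this, mul_zero]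
      have hgc := G.cycle_coeffs_zero hCcyc (hbal C hCcyc hCX) g hzero
      exact hgc e0 he0C
    · -- a vertex of degree one: remove its edge
      push_neg at hdeg
      obtain ⟨v, e, heF, hev, hunique⟩ := hdeg
      have hge : g e = 0 := by
        have h0 := congrFun hsum v
        simp only [Finset.sum_apply, Pi.smul_apply, smul_eq_mul, Pi.zero_apply] at h0
        rw [Finset.sum_eq_single e] at h0
        · exact (mul_eq_zero.mp h0).resolve_right hev
        · intro f hf hfe
          rw [hunique f hf hfe, mul_zero]
        · intro hcon; exact absurd heF hcon
      have hsum' : ∑ f ∈ F.erase e, g f • G.Dmat f = 0 := by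
        have hadd : ∑ f ∈ F.erase e, g f • G.Dmat f + g e • G.Dmat e
            = ∑ f ∈ F, g f • G.Dmat f := Finset.sum_erase_add F _ heF
        rw [hsum, hge, zero_smul, add_zero] at hadd
        exact hadd
      have hcard' : (F.erase e).card ≤ n := by
        have := Finset.card_erase_of_mem heF
        omega
      have hsubX : ↑(F.erase e) ⊆ X := fun x hx => hFX (Finset.erase_subset _ _ hx)
      by_cases he0e : e0 = e
      · rw [he0e]; exact hge
      · exact ih (F.erase e) hcard' hsubX g hsum' e0 (Finset.mem_erase.mpr ⟨he0e, he0⟩)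

end GainGraph

/-- The column matroid of `D(G, σ)` equals the gain-graphic (frame) matroid
`M(G, σ)`: a set `X` of columns of `D(G, σ)` is linearly independent over `K` if and
only if the edge set `X` contains no balanced cycle and each connected component of
the subgraph induced by `X` contains at most one cycle (i.e. any two cycles with
edges in `X` joined by a path within `X` have the same edge set). -/
theorem column_matroid_eq_frame_matroid {V E K : Type*} [Field K]
    [DecidableEq V] [DecidableEq K]
    (G : GainGraph V E K) (X : Set E) :
    LinearIndependent K (fun e : X => G.Dmat e.val) ↔
      ((∀ C : List (E × Bool), G.IsCycle C → (∀ s ∈ C, s.1 ∈ X) →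
          G.gainProd C ≠ 1) ∧
        (∀ C₁ C₂ : List (E × Bool), G.IsCycle C₁ → G.IsCycle C₂ →
          (∀ s ∈ C₁, s.1 ∈ X) → (∀ s ∈ C₂, s.1 ∈ X) →
          (∃ u ∈ C₁.map G.stepSrc, ∃ v ∈ C₂.map G.stepSrc, G.ReachIn X u v) →
          {e | e ∈ C₁.map Prod.fst} = {e | e ∈ C₂.map Prod.fst})) := by
  classical
  rw [G.li_iff_finsets]
  constructor
  · intro hLI
    refine ⟨fun C hC hCX => G.forward_balanced hLI hC hCX, ?_⟩
    intro C₁ C₂ h1 h2 hX1 hX2 hconn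
    by_contra hne
    have hcases : (∃ s ∈ C₂, s.1 ∉ C₁.map Prod.fst) ∨
        (∃ s ∈ C₁, s.1 ∉ C₂.map Prod.fst) := by
      by_contra hcon
      push_neg at hcon
      apply hne
      ext a
      simp only [Set.mem_setOf_eq]
      constructor
      · intro ha
        obtain ⟨t, ht, rfl⟩ := List.mem_map.mp ha
        exact hcon.2 t ht
      · intro ha
        obtain ⟨t, ht, rfl⟩ := List.mem_map.mp ha
        exact hcon.1 t ht
    rcases hcases with h | h
    · exact G.two_cycles_aux hLI h1 h2 hX1 hX2 hconn h
    · obtain ⟨u, hu, v, hv, huv⟩ := hconn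
      exact G.two_cycles_aux hLI h2 h1 hX2 hX1 ⟨v, hv, u, hu, G.reachIn_symm huv⟩ h
  · rintro ⟨hbal, htwo⟩
    intro F hFX g hsum e he
    exact G.backward_master hbal htwo F.card F le_rfl hFX g hsum e he
end
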